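/- arXiv:1304.3241 — 14 statements merged into one kernel-verified Lean document; each statement's English description precedes it below -/
import Mathlib

section
/- Every real solution (u, v, w, x, y, z) of the system satisfies (2u² + 2lu − 2u − l)·(2u² + 2lu + 2u + l) = 0, (2v² + 2mv − 2v − m)·(2v² + 2mv + 2v + m) = 0, (2w² + 2nw − 2w − n)·(2w² + 2nw + 2w + n) = 0, as well as the linear relations l·x = l + u − v − w, m·y = m − u + v − w, and n·z = n − u − v + w. -/
/-!
Write a, b, c for l + u - v - w, m + v - w - u, n + w - u - v, which the linear equations
identify with l x, m y, n z; the quadratic ones become a b = l m w², b c = m n u², c a = n l v².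
Then (u a)² = (l v w)² (multiply two and divide by the third), and similarly for v and w. Using
l m n = l + m + n, no two of u, v, w vanish, hence none does, so u a = s l v w with s² = 1, and
a b = l m w² forces the same s in v b = s m w u and w c = s n u v. A linear combination of these
equations then gives 2u² + 2lu = s (2u + l), whose square is the claimed quartic.
-/

section

variable {K : Type*} [Field K]

theorem eq_mul_of_mul_eq_mul {s P Q L M : K} (hs : s ^ 2 = 1) (hL : L ≠ 0) (hP : P = s * L)
    (h : P * Q = L * M) : Q = s * M := by
  have hsQ : s * Q = M := mul_left_cancel₀ hL (by rw [← h, hP]; ring)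
  linear_combination s * hsQ - Q * hs

/-- The system left after eliminating `x`, `y`, `z`, written cyclically in
`(l, u) → (m, v) → (n, w)` so that `rotate` is definitional. -/
structure MalfattiSystem (l m n u v w : K) : Prop where
  param : l * m * n = l + m + n
  w_sq : (l + u - v - w) * (m + v - w - u) = l * m * w ^ 2
  u_sq : (m + v - w - u) * (n + w - u - v) = m * n * u ^ 2
  v_sq : (n + w - u - v) * (l + u - v - w) = n * l * v ^ 2

namespace MalfattiSystem

variable {l m n u v w : K}

theorem rotate (h : MalfattiSystem l m n u v w) : MalfattiSystem m n l v w u :=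
  ⟨by linear_combination h.param, h.u_sq, h.v_sq, h.w_sq⟩

theorem sq_eq (h : MalfattiSystem l m n u v w) (hm : m ≠ 0) (hn : n ≠ 0) :
    (u * (l + u - v - w)) ^ 2 = (l * v * w) ^ 2 := by
  refine mul_left_cancel₀ (mul_ne_zero hm hn) ?_
  linear_combination (n + w - u - v) * (l + u - v - w) * h.w_sq + l * m * w ^ 2 * h.v_sq
    - (l + u - v - w) ^ 2 * h.u_sq

theorem mul_eq (h : MalfattiSystem l m n u v w) :
    u * (l + u - v - w) * (v * (m + v - w - u)) = l * v * w * (m * w * u) := by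
  linear_combination u * v * h.w_sq

theorem not_both_zero (h : MalfattiSystem l m n u v w) (hl : l ≠ 0) (hm : m ≠ 0) :
    ¬(u = 0 ∧ v = 0) := by
  rintro ⟨rfl, rfl⟩
  have hlw : (n + w) * (l - w) = 0 := by linear_combination h.v_sq
  have hmw : (n + w) * (m - w) = 0 := by linear_combination h.u_sq
  by_cases hnw : n + w = 0
  · obtain rfl : w = -n := by linear_combination hnw
    exact mul_ne_zero hl hm (by linear_combination h.w_sq + n * h.param)
  · obtain rfl : l = w := sub_eq_zero.1 ((mul_eq_zero.1 hlw).resolve_left hnw)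
    obtain rfl : m = l := sub_eq_zero.1 ((mul_eq_zero.1 hmw).resolve_left hnw)
    exact pow_ne_zero 4 hl (by linear_combination -h.w_sq)

theorem ne_zero (h : MalfattiSystem l m n u v w) (hl : l ≠ 0) (hm : m ≠ 0) (hn : n ≠ 0) :
    u ≠ 0 := by
  intro hu
  have hlvw : l * v * w = 0 := by simpa [hu] using (h.sq_eq hm hn).symm
  rcases mul_eq_zero.1 hlvw with hlv | hw
  · exact h.not_both_zero hl hm ⟨hu, (mul_eq_zero.1 hlv).resolve_left hl⟩
  · exact h.rotate.rotate.not_both_zero hn hl ⟨hw, hu⟩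

theorem exists_sign (h : MalfattiSystem l m n u v w) (hl : l ≠ 0) (hm : m ≠ 0) (hn : n ≠ 0) :
    ∃ s : K, s ^ 2 = 1 ∧ u * (l + u - v - w) = s * (l * v * w) ∧
      v * (m + v - w - u) = s * (m * w * u) ∧ w * (n + w - u - v) = s * (n * u * v) := by
  have hlvw : l * v * w ≠ 0 :=
    mul_ne_zero (mul_ne_zero hl (h.rotate.ne_zero hm hn hl)) (h.rotate.rotate.ne_zero hn hl hm)
  have hs : (u * (l + u - v - w) / (l * v * w)) ^ 2 = 1 := by
    rw [div_pow, h.sq_eq hm hn, div_self (pow_ne_zero 2 hlvw)]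
  have hu : u * (l + u - v - w) = u * (l + u - v - w) / (l * v * w) * (l * v * w) :=
    (div_mul_cancel₀ _ hlvw).symm
  exact ⟨_, hs, hu, eq_mul_of_mul_eq_mul hs hlvw hu h.mul_eq,
    eq_mul_of_mul_eq_mul hs hlvw hu (by linear_combination h.rotate.rotate.mul_eq)⟩

theorem quadratic_eq (h : MalfattiSystem l m n u v w) (hm : m ≠ 0) (hn : n ≠ 0) {s : K}
    (hs : s ^ 2 = 1) (hu : u * (l + u - v - w) = s * (l * v * w))
    (hv : v * (m + v - w - u) = s * (m * w * u)) (hw : w * (n + w - u - v) = s * (n * u * v)) :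
    2 * u ^ 2 + 2 * l * u = s * (2 * u + l) := by
  refine sub_eq_zero.1 ((mul_eq_zero.1 ?_).resolve_left (mul_ne_zero hm hn))
  linear_combination 2 * m * n * hu - 2 * n * s * hv - 2 * m * s * hw - s * n * h.w_sq
    - s * m * h.v_sq + s * l * h.u_sq + s * (u ^ 2 - (v - w) ^ 2) * h.param
    - 2 * m * n * u * (v + w) * hs

theorem quadratic (h : MalfattiSystem l m n u v w) (hl : l ≠ 0) (hm : m ≠ 0) (hn : n ≠ 0) :
    (2 * u ^ 2 + 2 * l * u - 2 * u - l) * (2 * u ^ 2 + 2 * l * u + 2 * u + l) = 0 := by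
  obtain ⟨s, hs, hu, hv, hw⟩ := h.exists_sign hl hm hn
  linear_combination (2 * u ^ 2 + 2 * l * u + s * (2 * u + l)) * h.quadratic_eq hm hn hs hu hv hw
    + (2 * u + l) ^ 2 * hs

end MalfattiSystem

end

theorem malfatti_system_in_necessary
    (l m n : ℝ) (hl : 0 < l) (hm : 0 < m) (hn : 0 < n)
    (hlmn : l * m * n = l + m + n)
    (u v w x y z : ℝ)
    (h1 : m * y + n * z + 2 * u = m + n)
    (h2 : l * x + n * z + 2 * v = l + n)
    (h3 : l * x + m * y + 2 * w = l + m)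
    (h4 : x * y = w ^ 2)
    (h5 : x * z = v ^ 2)
    (h6 : y * z = u ^ 2) :
    (2 * u ^ 2 + 2 * l * u - 2 * u - l) * (2 * u ^ 2 + 2 * l * u + 2 * u + l) = 0 ∧
    (2 * v ^ 2 + 2 * m * v - 2 * v - m) * (2 * v ^ 2 + 2 * m * v + 2 * v + m) = 0 ∧
    (2 * w ^ 2 + 2 * n * w - 2 * w - n) * (2 * w ^ 2 + 2 * n * w + 2 * w + n) = 0 ∧
    l * x = l + u - v - w ∧
    m * y = m - u + v - w ∧
    n * z = n - u - v + w := by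
  have hx : l * x = l + u - v - w := by linarith
  have hy : m * y = m - u + v - w := by linarith
  have hz : n * z = n - u - v + w := by linarith
  have h : MalfattiSystem l m n u v w :=
    ⟨hlmn, by linear_combination (l * m) * h4 - (m * y) * hx - (l + u - v - w) * hy,
      by linear_combination (m * n) * h6 - (n * z) * hy - (m - u + v - w) * hz,
      by linear_combination (n * l) * h5 - (l * x) * hz - (n - u - v + w) * hx⟩
  exact ⟨h.quadratic hl.ne' hm.ne' hn.ne', h.rotate.quadratic hm.ne' hn.ne' hl.ne',
    h.rotate.rotate.quadratic hn.ne' hl.ne' hm.ne', hx, hy, hz⟩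
end

section
/- Every real solution (u, v, w, x, y, z) of the system satisfies (2u² + 2lu − 2u − l)·(2u² + 2lu + 2u + l) = 0, (2v² − 2m̄v − 2v + m̄)·(2v² − 2m̄v + 2v − m̄) = 0, (2w² − 2n̄w − 2w + n̄)·(2w² − 2n̄w + 2w − n̄) = 0, as well as the linear relations l·x = l + u − v − w, m̄·y = m̄ + u − v + w, and n̄·z = n̄ + u + v − w. -/
/-!
With `L = l`, `M = -m̄`, `N = -n̄` the constraint becomes `LMN = L + M + N`, and the system is
invariant under the cyclic shift `(L, u, x) → (M, v, y) → (N, w, z)` and under negating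
`L, M, N, u, v, w`. Its linear part gives `Lx = L + u - v - w` and shifts. Positivity rules out
`x = 0`, so `uvw ≠ 0`, and `(xyz)² = (xy)(yz)(zx) = (uvw)²`; up to negation `xyz = uvw`, i.e.
`xu = vw`, which turns the linear relations into `L (u - vw) = u (v + w - u)` and shifts.
Clearing these denominators in `LMN = L + M + N` yields `2(uv + vw + wu) - 2uvw = u + v + w`,
and then `(u - vw) (L (2u - 1) - 2u (1 - u)) = 0`. Writing `2u - 1 = tan θ`, the conclusion says
`L = cot 2θ`, and the sum relation says the three angles add up to `π/4` modulo `π`.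
-/

theorem sum_relation_of_cyclic_eqs {L M N u v w : ℝ} (hu : u ≠ 0) (hv : v ≠ 0) (hw : w ≠ 0)
    (hL : L * (u - v * w) = u * (v + w - u)) (hM : M * (v - w * u) = v * (w + u - v))
    (hN : N * (w - u * v) = w * (u + v - w)) (hLMN : L * M * N = L + M + N) :
    2 * (u * v + v * w + w * u) - 2 * u * v * w = u + v + w := by
  have key : u * v * w * (2 * (u * v + v * w + w * u) - 2 * u * v * w - (u + v + w)) = 0 := by
    linear_combination (u - v * w) * (v - w * u) * (w - u * v) * hLMN
      - (M * (v - w * u) * (N * (w - u * v)) - (v - w * u) * (w - u * v)) * hL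
      - (u * (v + w - u) * (N * (w - u * v)) - (u - v * w) * (w - u * v)) * hM
      - (u * (v + w - u) * (v * (w + u - v)) - (u - v * w) * (v - w * u)) * hN
  linear_combination (mul_eq_zero.mp key).resolve_left (mul_ne_zero (mul_ne_zero hu hv) hw)

theorem mul_two_mul_sub_one_of_cyclic_eqs {L M N u v w : ℝ} (hu : u ≠ 0) (hv : v ≠ 0)
    (hw : w ≠ 0) (hL : L * (u - v * w) = u * (v + w - u)) (hM : M * (v - w * u) = v * (w + u - v))
    (hN : N * (w - u * v) = w * (u + v - w)) (hLMN : L * M * N = L + M + N) :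
    L * (2 * u - 1) = 2 * u * (1 - u) := by
  by_cases hdeg : u - v * w = 0
  · -- `hL` says nothing about `L` here; it is recovered from `LMN = L + M + N`, where `M` and `N`
    -- have the simple denominators below.
    have hsum : u = v + w := by
      have := (mul_eq_zero.mp (hL.symm.trans (by rw [hdeg, mul_zero]))).resolve_left hu
      linarith
    have hprod : u = v * w := by linarith
    have hMb : M * (v - w * u) = 2 * u := by rw [hM]; linear_combination v * hsum - 2 * hprod
    have hNc : N * (w - u * v) = 2 * u := by rw [hN]; linear_combination w * hsum - 2 * hprod
    have hbc_add : (v - w * u) + (w - u * v) = u * (1 - u) := by linear_combination (u - 1) * hsum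
    have hbc_mul : (v - w * u) * (w - u * v) = u * (1 + 2 * u) := by
      linear_combination -(1 + u) ^ 2 * hprod + (2 * u ^ 2 - u * (u - v - w)) * hsum
    have : u * (L * (2 * u - 1) - 2 * u * (1 - u)) = 0 := by
      linear_combination (v - w * u) * (w - u * v) * hLMN - L * (N * (w - u * v)) * hMb
        - 2 * u * L * hNc + (w - u * v) * hMb + (v - w * u) * hNc + L * hbc_mul + 2 * u * hbc_add
    linear_combination (mul_eq_zero.mp this).resolve_left hu
  · exact mul_left_cancel₀ hdeg (by
      linear_combination (2 * u - 1) * hL + u * sum_relation_of_cyclic_eqs hu hv hw hL hM hN hLMN)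

/-- The system of the statement for `L = l`, `M = -m̄`, `N = -n̄`. -/
structure MalfattiSystem_s3 (L M N u v w x y z : ℝ) : Prop where
  prod_eq_sum : L * M * N = L + M + N
  mul_x : L * x = L + u - v - w
  mul_y : M * y = M + v - w - u
  mul_z : N * z = N + w - u - v
  xy_eq : x * y = w ^ 2
  yz_eq : y * z = u ^ 2
  zx_eq : z * x = v ^ 2

namespace MalfattiSystem_s3

variable {L M N u v w x y z : ℝ}

theorem rotate_s3 (h : MalfattiSystem_s3 L M N u v w x y z) : MalfattiSystem_s3 M N L v w u y z x where
  prod_eq_sum := by linear_combination h.prod_eq_sum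
  mul_x := h.mul_y
  mul_y := h.mul_z
  mul_z := h.mul_x
  xy_eq := h.yz_eq
  yz_eq := h.zx_eq
  zx_eq := h.xy_eq

theorem neg (h : MalfattiSystem_s3 L M N u v w x y z) :
    MalfattiSystem_s3 (-L) (-M) (-N) (-u) (-v) (-w) x y z where
  prod_eq_sum := by linear_combination -h.prod_eq_sum
  mul_x := by linear_combination -h.mul_x
  mul_y := by linear_combination -h.mul_y
  mul_z := by linear_combination -h.mul_z
  xy_eq := by linear_combination h.xy_eq
  yz_eq := by linear_combination h.yz_eq
  zx_eq := by linear_combination h.zx_eq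

theorem x_ne_zero (h : MalfattiSystem_s3 L M N u v w x y z) (hM : M ≠ 0) (hN : N ≠ 0) : x ≠ 0 := by
  intro hx
  have hw : w = 0 := pow_eq_zero_iff two_ne_zero |>.mp (by rw [← h.xy_eq, hx, zero_mul])
  have hv : v = 0 := pow_eq_zero_iff two_ne_zero |>.mp (by rw [← h.zx_eq, hx, mul_zero])
  subst hx hv hw
  have hu : u = -L := by linear_combination -h.mul_x
  subst hu
  exact mul_ne_zero hM hN (by
    linear_combination M * N * h.yz_eq - N * z * h.mul_y - (M + L) * h.mul_z + L * h.prod_eq_sum)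

theorem u_ne_zero (h : MalfattiSystem_s3 L M N u v w x y z) (hL : L ≠ 0) (hM : M ≠ 0)
    (hN : N ≠ 0) : u ≠ 0 := by
  have hyz : y * z ≠ 0 := mul_ne_zero (h.rotate_s3.x_ne_zero hN hL) (h.rotate_s3.rotate_s3.x_ne_zero hL hM)
  rw [h.yz_eq] at hyz
  exact pow_ne_zero_iff two_ne_zero |>.mp hyz

theorem mul_sub_mul_eq (h : MalfattiSystem_s3 L M N u v w x y z) (hu : u ≠ 0)
    (hxyz : x * y * z = u * v * w) : L * (u - v * w) = u * (v + w - u) := by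
  have hxu : x * u = v * w := mul_left_cancel₀ hu (by linear_combination hxyz - x * h.yz_eq)
  linear_combination -(u * h.mul_x) + L * hxu

theorem mul_two_mul_sub_one (h : MalfattiSystem_s3 L M N u v w x y z) (hL : L ≠ 0) (hM : M ≠ 0)
    (hN : N ≠ 0) (hxyz : x * y * z = u * v * w) : L * (2 * u - 1) = 2 * u * (1 - u) := by
  have hu := h.u_ne_zero hL hM hN
  have hv := h.rotate_s3.u_ne_zero hM hN hL
  have hw := h.rotate_s3.rotate_s3.u_ne_zero hN hL hM
  exact mul_two_mul_sub_one_of_cyclic_eqs hu hv hw (h.mul_sub_mul_eq hu hxyz)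
    (h.rotate_s3.mul_sub_mul_eq hv (by linear_combination hxyz))
    (h.rotate_s3.rotate_s3.mul_sub_mul_eq hw (by linear_combination hxyz)) h.prod_eq_sum

theorem factor_eq_zero (h : MalfattiSystem_s3 L M N u v w x y z) (hL : L ≠ 0) (hM : M ≠ 0)
    (hN : N ≠ 0) :
    (L * (2 * u - 1) - 2 * u * (1 - u)) * (L * (2 * u + 1) + 2 * u * (1 + u)) = 0 := by
  have hsq : (x * y * z) * (x * y * z) = (u * v * w) * (u * v * w) := by
    linear_combination (y * z * z * x) * h.xy_eq + (w ^ 2 * z * x) * h.yz_eq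
      + (w ^ 2 * u ^ 2) * h.zx_eq
  rcases mul_self_eq_mul_self_iff.mp hsq with hxyz | hxyz
  · rw [h.mul_two_mul_sub_one hL hM hN hxyz, sub_self, zero_mul]
  · have := h.neg.mul_two_mul_sub_one (neg_ne_zero.mpr hL) (neg_ne_zero.mpr hM)
      (neg_ne_zero.mpr hN) (by linear_combination hxyz)
    linear_combination (L * (2 * u - 1) - 2 * u * (1 - u)) * this

end MalfattiSystem_s3

theorem malfatti_system_ex_necessary
    (l mb nb : ℝ) (hl : 0 < l) (hm : 0 < mb) (hn : 0 < nb)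
    (hlmn : l * mb * nb = l - mb - nb)
    (u v w x y z : ℝ)
    (h1 : mb * y + nb * z - 2 * u = mb + nb)
    (h2 : l * x - nb * z + 2 * v = l - nb)
    (h3 : l * x - mb * y + 2 * w = l - mb)
    (h4 : x * y = w ^ 2)
    (h5 : x * z = v ^ 2)
    (h6 : y * z = u ^ 2) :
    (2 * u ^ 2 + 2 * l * u - 2 * u - l) * (2 * u ^ 2 + 2 * l * u + 2 * u + l) = 0 ∧
    (2 * v ^ 2 - 2 * mb * v - 2 * v + mb) * (2 * v ^ 2 - 2 * mb * v + 2 * v - mb) = 0 ∧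
    (2 * w ^ 2 - 2 * nb * w - 2 * w + nb) * (2 * w ^ 2 - 2 * nb * w + 2 * w - nb) = 0 ∧
    l * x = l + u - v - w ∧
    mb * y = mb + u - v + w ∧
    nb * z = nb + u + v - w := by
  have h : MalfattiSystem_s3 l (-mb) (-nb) u v w x y z :=
    { prod_eq_sum := by linear_combination hlmn
      mul_x := by linear_combination (h1 + h2 + h3) / 2
      mul_y := by linear_combination (h3 - h1 - h2) / 2
      mul_z := by linear_combination (h2 - h1 - h3) / 2
      xy_eq := h4
      yz_eq := h6
      zx_eq := by linear_combination h5 }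
  have hL : l ≠ 0 := hl.ne'
  have hM : -mb ≠ 0 := neg_ne_zero.mpr hm.ne'
  have hN : -nb ≠ 0 := neg_ne_zero.mpr hn.ne'
  refine ⟨?_, ?_, ?_, h.mul_x, by linear_combination -h.mul_y, by linear_combination -h.mul_z⟩
  · linear_combination h.factor_eq_zero hL hM hN
  · linear_combination h.rotate_s3.factor_eq_zero hM hN hL
  · linear_combination h.rotate_s3.rotate_s3.factor_eq_zero hN hL hM
end

section
/- If l, m, n are positive real numbers with l·m·n = l + m + n, then there exist A, B, C ∈ (0, π) with A + B + C = π such that cot(A/2) = l, cot(B/2) = m, and cot(C/2) = n. -/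
/-! With `x = l⁻¹, y = m⁻¹, z = n⁻¹` the relation `lmn = l + m + n` reads `xy + yz + zx = 1`,
which is exactly the condition for `arctan x + arctan y + arctan z = π / 2`. Doubling these three
arctangents gives the angles, since `cot (arctan x) = x⁻¹`. -/

open Real

namespace Real

theorem cot_arctan (x : ℝ) : cot (arctan x) = x⁻¹ := by
  rw [← tan_inv_eq_cot, tan_arctan]

theorem two_mul_arctan_mem_Ioo_zero_pi {x : ℝ} (hx : 0 < x) : 2 * arctan x ∈ Set.Ioo 0 π := by
  have hpos : 0 < arctan x := by simpa using arctan_strictMono hx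
  constructor <;> linarith [arctan_lt_pi_div_two x]

theorem arctan_add_arctan_add_arctan_eq_pi_div_two {x y z : ℝ} (hx : 0 < x) (hy : 0 < y)
    (hz : 0 < z) (h : x * y + y * z + z * x = 1) :
    arctan x + arctan y + arctan z = π / 2 := by
  have hxy : x * y = 1 - z * (x + y) := by linarith
  have hxy_lt : x * y < 1 := by nlinarith [mul_pos hz (add_pos hx hy)]
  have hsum : arctan x + arctan y = arctan z⁻¹ := by
    rw [arctan_add hxy_lt, hxy, sub_sub_cancel, div_mul_cancel_right₀ (add_pos hx hy).ne']
  rw [hsum, arctan_inv_of_pos hz]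
  ring

end Real

theorem exists_triangle_of_cot_relation (l m n : ℝ)
    (hl : 0 < l) (hm : 0 < m) (hn : 0 < n)
    (hlmn : l * m * n = l + m + n) :
    ∃ A B C : ℝ, A ∈ Set.Ioo 0 π ∧ B ∈ Set.Ioo 0 π ∧ C ∈ Set.Ioo 0 π ∧
      A + B + C = π ∧
      Real.cot (A / 2) = l ∧ Real.cot (B / 2) = m ∧ Real.cot (C / 2) = n := by
  have hl' := inv_pos.mpr hl
  have hm' := inv_pos.mpr hm
  have hn' := inv_pos.mpr hn
  have hinv : l⁻¹ * m⁻¹ + m⁻¹ * n⁻¹ + n⁻¹ * l⁻¹ = 1 := by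
    field_simp
    linarith
  have hsum := arctan_add_arctan_add_arctan_eq_pi_div_two hl' hm' hn' hinv
  refine ⟨2 * arctan l⁻¹, 2 * arctan m⁻¹, 2 * arctan n⁻¹,
    two_mul_arctan_mem_Ioo_zero_pi hl', two_mul_arctan_mem_Ioo_zero_pi hm',
    two_mul_arctan_mem_Ioo_zero_pi hn', by linarith, ?_, ?_, ?_⟩ <;>
  rw [mul_div_cancel_left₀ _ two_ne_zero, cot_arctan, inv_inv]
end

section
/- With the above notation, r·(l + m + n − 1 + √(l²+1) − √(m²+1) − √(n²+1))/(2l) = r_A·sin²(σ − α). -/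
open Real

set_option maxHeartbeats 2000000 in
theorem malfatti_radius_i1_A
    (a b c : ℝ) (ha : 0 < a) (hb : 0 < b) (hc : 0 < c)
    (habc : a < b + c) (hbca : b < c + a) (hcab : c < a + b)
    (s r rA rB rC α β γ σ l m n : ℝ)
    (hs : s = (a + b + c) / 2)
    (hr : r = Real.sqrt ((s - a) * (s - b) * (s - c) / s))
    (hrA : rA = Real.sqrt (s * (s - b) * (s - c) / (s - a)))
    (hrB : rB = Real.sqrt (s * (s - c) * (s - a) / (s - b)))
    (hrC : rC = Real.sqrt (s * (s - a) * (s - b) / (s - c)))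
    (hα : α ∈ Set.Ioo 0 (π / 2)) (hβ : β ∈ Set.Ioo 0 (π / 2)) (hγ : γ ∈ Set.Ioo 0 (π / 2))
    (hsinα : Real.sin α ^ 2 = a / s)
    (hsinβ : Real.sin β ^ 2 = b / s)
    (hsinγ : Real.sin γ ^ 2 = c / s)
    (hσ : σ = (α + β + γ) / 2)
    (hl : l = (s - a) / r) (hm : m = (s - b) / r) (hn : n = (s - c) / r) :
    r * (l + m + n - 1 + Real.sqrt (l ^ 2 + 1) - Real.sqrt (m ^ 2 + 1) - Real.sqrt (n ^ 2 + 1)) / (2 * l) = rA * Real.sin (σ - α) ^ 2 := by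
  have hs0 : 0 < s := by rw [hs]; linarith
  have hx : 0 < s - a := by rw [hs]; linarith
  have hy : 0 < s - b := by rw [hs]; linarith
  have hz : 0 < s - c := by rw [hs]; linarith
  set U := Real.sqrt (s - a) with hUdef
  set V := Real.sqrt (s - b) with hVdef
  set W := Real.sqrt (s - c) with hWdef
  set SS := Real.sqrt s with hSSdef
  set P := Real.sqrt a with hPdef
  set Q := Real.sqrt b with hQdef
  set T := Real.sqrt c with hTdef
  have hU0 : 0 < U := Real.sqrt_pos.mpr hx
  have hV0 : 0 < V := Real.sqrt_pos.mpr hy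
  have hW0 : 0 < W := Real.sqrt_pos.mpr hz
  have hSS0 : 0 < SS := Real.sqrt_pos.mpr hs0
  have hP0 : 0 < P := Real.sqrt_pos.mpr ha
  have hQ0 : 0 < Q := Real.sqrt_pos.mpr hb
  have hT0 : 0 < T := Real.sqrt_pos.mpr hc
  have hU2 : U ^ 2 = s - a := Real.sq_sqrt hx.le
  have hV2 : V ^ 2 = s - b := Real.sq_sqrt hy.le
  have hW2 : W ^ 2 = s - c := Real.sq_sqrt hz.le
  have hSS2 : SS ^ 2 = s := Real.sq_sqrt hs0.le
  have hP2 : P ^ 2 = a := Real.sq_sqrt ha.le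
  have hQ2 : Q ^ 2 = b := Real.sq_sqrt hb.le
  have hT2 : T ^ 2 = c := Real.sq_sqrt hc.le
  -- r and rA in sqrt-atom form
  have hr2 : r = U * V * W / SS := by
    rw [hr, Real.sqrt_div (by positivity) s, Real.sqrt_mul (by positivity), Real.sqrt_mul hx.le]
  have hrA2 : rA = SS * V * W / U := by
    rw [hrA, Real.sqrt_div (by positivity) (s - a), Real.sqrt_mul (by positivity),
      Real.sqrt_mul hs0.le]
  have hr0 : 0 < r := by rw [hr2]; positivity
  -- l, m, n in sqrt-atom form
  have hl2 : l = U * SS / (V * W) := by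
    rw [hl, hr2, ← hU2]; field_simp
  have hm2 : m = V * SS / (W * U) := by
    rw [hm, hr2, ← hV2]; field_simp
  have hn2 : n = W * SS / (U * V) := by
    rw [hn, hr2, ← hW2]; field_simp
  -- the square roots of l²+1 etc.
  have keyA : U ^ 2 * SS ^ 2 + V ^ 2 * W ^ 2 = Q ^ 2 * T ^ 2 := by
    rw [hU2, hV2, hW2, hSS2, hQ2, hT2, hs]; ring
  have keyB : V ^ 2 * SS ^ 2 + W ^ 2 * U ^ 2 = T ^ 2 * P ^ 2 := by
    rw [hU2, hV2, hW2, hSS2, hT2, hP2, hs]; ring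
  have keyC : W ^ 2 * SS ^ 2 + U ^ 2 * V ^ 2 = P ^ 2 * Q ^ 2 := by
    rw [hU2, hV2, hW2, hSS2, hP2, hQ2, hs]; ring
  have hL : Real.sqrt (l ^ 2 + 1) = Q * T / (V * W) := by
    rw [show l ^ 2 + 1 = (Q * T / (V * W)) ^ 2 by
      rw [hl2]; field_simp; linear_combination keyA]
    exact Real.sqrt_sq (by positivity)
  have hM : Real.sqrt (m ^ 2 + 1) = T * P / (W * U) := by
    rw [show m ^ 2 + 1 = (T * P / (W * U)) ^ 2 by
      rw [hm2]; field_simp; linear_combination keyB]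
    exact Real.sqrt_sq (by positivity)
  have hN : Real.sqrt (n ^ 2 + 1) = P * Q / (U * V) := by
    rw [show n ^ 2 + 1 = (P * Q / (U * V)) ^ 2 by
      rw [hn2]; field_simp; linear_combination keyC]
    exact Real.sqrt_sq (by positivity)
  -- trig values
  have hπ := Real.pi_pos
  have hcosval : ∀ θ t, θ ∈ Set.Ioo 0 (π / 2) → Real.sin θ ^ 2 = t / s → 0 < t → t < s →
      Real.cos θ = Real.sqrt (s - t) / SS ∧ Real.sin θ = Real.sqrt t / SS := by
    intro θ t hθ hsin ht hts
    have hcpos : 0 < Real.cos θ :=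
      Real.cos_pos_of_mem_Ioo ⟨by linarith [hθ.1], hθ.2⟩
    have hspos : 0 < Real.sin θ :=
      Real.sin_pos_of_pos_of_lt_pi hθ.1 (by linarith [hθ.2])
    constructor
    · have h1 : Real.cos θ ^ 2 = (s - t) / s := by
        have h := Real.sin_sq_add_cos_sq θ
        rw [hsin] at h
        field_simp at h ⊢
        linarith
      rw [← Real.sqrt_sq hcpos.le, h1, Real.sqrt_div (by linarith) s]
    · rw [← Real.sqrt_sq hspos.le, hsin, Real.sqrt_div ht.le s]
  have hta : a < s := by rw [hs]; linarith
  have htb : b < s := by rw [hs]; linarith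
  have htc : c < s := by rw [hs]; linarith
  obtain ⟨hcosα, hsinα'⟩ := hcosval α a hα hsinα ha hta
  obtain ⟨hcosβ, hsinβ'⟩ := hcosval β b hβ hsinβ hb htb
  obtain ⟨hcosγ, hsinγ'⟩ := hcosval γ c hγ hsinγ hc htc
  -- sin (σ - α) ^ 2
  have hsin2 : Real.sin (σ - α) ^ 2
      = (1 - (U * V * W - U * Q * T + P * Q * W + P * V * T) / SS ^ 3) / 2 := by
    have h1 : Real.sin (σ - α) ^ 2 = (1 - Real.cos (2 * (σ - α))) / 2 := by
      have := Real.cos_sq (σ - α)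
      have h2 := Real.sin_sq_add_cos_sq (σ - α)
      linarith
    have h2 : 2 * (σ - α) = β + γ - α := by rw [hσ]; ring
    rw [h1, h2, show β + γ - α = (β + γ) - α from by ring, Real.cos_sub, Real.cos_add,
      Real.sin_add, hcosα, hsinα', hcosβ, hsinβ', hcosγ, hsinγ']
    field_simp
    ring
  -- main computation
  have hrel : SS ^ 2 = U ^ 2 + V ^ 2 + W ^ 2 := by
    rw [hU2, hV2, hW2, hSS2, hs]; ring
  have hE : r * (l + m + n - 1 + Real.sqrt (l ^ 2 + 1) - Real.sqrt (m ^ 2 + 1)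
        - Real.sqrt (n ^ 2 + 1)) / (2 * l)
      = V * W * (SS * (U ^ 2 + V ^ 2 + W ^ 2) - U * V * W + U * Q * T - V * T * P - W * P * Q)
        / (2 * U * SS ^ 2) := by
    rw [hL, hM, hN, hr2, hl2, hm2, hn2]
    field_simp
  have hE' : rA * Real.sin (σ - α) ^ 2
      = V * W * (SS * SS ^ 2 - U * V * W + U * Q * T - V * T * P - W * P * Q)
        / (2 * U * SS ^ 2) := by
    rw [hrA2, hsin2]
    field_simp
    ring
  rw [hE, hE', show SS * SS ^ 2 = SS * (U ^ 2 + V ^ 2 + W ^ 2) from by rw [hrel]]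
end

section
/- With the above notation, r·(l + m + n − 1 + √(l²+1) + √(m²+1) + √(n²+1))/(2l) = r_A·sin²σ. -/
/-!
Write `x = s - a`, `y = s - b`, `z = s - c`, so that `s = x + y + z`, `cos² α = x / s` and
`sin² α = (y + z) / s`. Then `r = s cos α cos β cos γ`, `r l = x` and
`r √(l² + 1) = √(x² + r²) = s cos α sin β sin γ` (because `x s + y z = b c`), and cyclically;
in terms of the triangle's angle `A`, `l = cot (A / 2)` and `√(l² + 1) = csc (A / 2)`.
Hence `r (l + m + n - 1 + Σ √(l² + 1))` is `s` times
`1 - cos α cos β cos γ + Σ cos α sin β sin γ = 1 - cos (α + β + γ) = 2 sin² σ`,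
and it remains to divide by `2 l`, using `r_A l = s`.
-/

open Real Set

lemma cos_add_add (α β γ : ℝ) :
    cos (α + β + γ) = cos α * cos β * cos γ - cos α * sin β * sin γ
      - sin α * cos β * sin γ - sin α * sin β * cos γ := by
  simp only [cos_add, sin_add]
  ring

lemma mul_sqrt_div_sq_add_one {r : ℝ} (hr : 0 < r) (x : ℝ) :
    r * √((x / r) ^ 2 + 1) = √(x ^ 2 + r ^ 2) := by
  have h : x ^ 2 + r ^ 2 = r ^ 2 * ((x / r) ^ 2 + 1) := by field_simp
  rw [h, sqrt_mul (sq_nonneg r), sqrt_sq hr.le]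

/-- Both sides are `√(s x y z)`: this is `r_A (s - a) = s r`, both being the area
by Heron's formula. -/
lemma sqrt_div_mul_eq_mul_sqrt_div {s x : ℝ} (hs : 0 < s) (hx : 0 < x) (y z : ℝ) :
    √(s * y * z / x) * x = s * √(x * y * z / s) :=
  calc √(s * y * z / x) * x = √(s * y * z / x * x ^ 2) := by
        rw [sqrt_mul' _ (sq_nonneg x), sqrt_sq hx.le]
    _ = √(s ^ 2 * (x * y * z / s)) := by congr 1; field_simp
    _ = s * √(x * y * z / s) := by rw [sqrt_mul (sq_nonneg s), sqrt_sq hs.le]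

section

variable {a b c s α β γ : ℝ}

lemma cos_sq_eq_sub_div_of_sin_sq_eq_div (hs : s ≠ 0) (h : sin α ^ 2 = a / s) :
    cos α ^ 2 = (s - a) / s := by
  rw [cos_sq', h]
  field_simp

lemma cos_nonneg_of_mem_Icc_zero_pi_div_two (hα : α ∈ Icc 0 (π / 2)) : 0 ≤ cos α :=
  cos_nonneg_of_mem_Icc ⟨by linarith [pi_pos, hα.1], hα.2⟩

lemma sin_nonneg_of_mem_Icc_zero_pi_div_two (hα : α ∈ Icc 0 (π / 2)) : 0 ≤ sin α :=
  sin_nonneg_of_nonneg_of_le_pi hα.1 (by linarith [pi_pos, hα.2])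

lemma sqrt_mul_mul_div_eq_mul_cos_mul_cos_mul_cos (hs : 0 < s)
    (hα : α ∈ Icc 0 (π / 2)) (hβ : β ∈ Icc 0 (π / 2)) (hγ : γ ∈ Icc 0 (π / 2))
    (hsinα : sin α ^ 2 = a / s) (hsinβ : sin β ^ 2 = b / s) (hsinγ : sin γ ^ 2 = c / s) :
    √((s - a) * (s - b) * (s - c) / s) = s * cos α * cos β * cos γ := by
  have := cos_nonneg_of_mem_Icc_zero_pi_div_two hα
  have := cos_nonneg_of_mem_Icc_zero_pi_div_two hβ
  have := cos_nonneg_of_mem_Icc_zero_pi_div_two hγ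
  rw [← sqrt_sq (show 0 ≤ s * cos α * cos β * cos γ by positivity)]
  congr 1
  rw [mul_pow, mul_pow, mul_pow, cos_sq_eq_sub_div_of_sin_sq_eq_div hs.ne' hsinα,
    cos_sq_eq_sub_div_of_sin_sq_eq_div hs.ne' hsinβ, cos_sq_eq_sub_div_of_sin_sq_eq_div hs.ne' hsinγ]
  field_simp

lemma sqrt_sq_add_sq_eq_mul_cos_mul_sin_mul_sin {r : ℝ} (hs : s = (a + b + c) / 2) (hs0 : 0 < s)
    (hα : α ∈ Icc 0 (π / 2)) (hβ : β ∈ Icc 0 (π / 2)) (hγ : γ ∈ Icc 0 (π / 2))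
    (hsinα : sin α ^ 2 = a / s) (hsinβ : sin β ^ 2 = b / s) (hsinγ : sin γ ^ 2 = c / s)
    (hr : r ^ 2 = (s - a) * (s - b) * (s - c) / s) :
    √((s - a) ^ 2 + r ^ 2) = s * cos α * sin β * sin γ := by
  have := cos_nonneg_of_mem_Icc_zero_pi_div_two hα
  have := sin_nonneg_of_mem_Icc_zero_pi_div_two hβ
  have := sin_nonneg_of_mem_Icc_zero_pi_div_two hγ
  rw [← sqrt_sq (show 0 ≤ s * cos α * sin β * sin γ by positivity)]
  congr 1
  rw [mul_pow, mul_pow, mul_pow, cos_sq_eq_sub_div_of_sin_sq_eq_div hs0.ne' hsinα, hsinβ, hsinγ, hr]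
  field_simp
  rw [hs]
  ring

lemma inradius_mul_sum_cot_add_csc_eq {r : ℝ} (hs : s = (a + b + c) / 2)
    (hx : 0 < s - a) (hy : 0 < s - b) (hz : 0 < s - c)
    (hα : α ∈ Icc 0 (π / 2)) (hβ : β ∈ Icc 0 (π / 2)) (hγ : γ ∈ Icc 0 (π / 2))
    (hsinα : sin α ^ 2 = a / s) (hsinβ : sin β ^ 2 = b / s) (hsinγ : sin γ ^ 2 = c / s)
    (hr : r = √((s - a) * (s - b) * (s - c) / s)) :
    r * ((s - a) / r + (s - b) / r + (s - c) / r - 1 + √(((s - a) / r) ^ 2 + 1)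
      + √(((s - b) / r) ^ 2 + 1) + √(((s - c) / r) ^ 2 + 1))
      = 2 * s * sin ((α + β + γ) / 2) ^ 2 := by
  have hs0 : 0 < s := by linarith
  have hr0 : 0 < r := by rw [hr]; positivity
  have hr2 : r ^ 2 = (s - a) * (s - b) * (s - c) / s := by rw [hr, sq_sqrt]; positivity
  have hcot : r * ((s - a) / r + (s - b) / r + (s - c) / r) = s := by
    field_simp
    rw [hs]
    ring
  have hcscα : r * √(((s - a) / r) ^ 2 + 1) = s * cos α * sin β * sin γ := by
    rw [mul_sqrt_div_sq_add_one hr0,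
      sqrt_sq_add_sq_eq_mul_cos_mul_sin_mul_sin hs hs0 hα hβ hγ hsinα hsinβ hsinγ hr2]
  have hcscβ : r * √(((s - b) / r) ^ 2 + 1) = s * cos β * sin γ * sin α := by
    rw [mul_sqrt_div_sq_add_one hr0, sqrt_sq_add_sq_eq_mul_cos_mul_sin_mul_sin
      (by rw [hs]; ring) hs0 hβ hγ hα hsinβ hsinγ hsinα (by rw [hr2]; ring)]
  have hcscγ : r * √(((s - c) / r) ^ 2 + 1) = s * cos γ * sin α * sin β := by
    rw [mul_sqrt_div_sq_add_one hr0, sqrt_sq_add_sq_eq_mul_cos_mul_sin_mul_sin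
      (by rw [hs]; ring) hs0 hγ hα hβ hsinγ hsinα hsinβ (by rw [hr2]; ring)]
  have hrcos : r = s * cos α * cos β * cos γ := by
    rw [hr, sqrt_mul_mul_div_eq_mul_cos_mul_cos_mul_cos hs0 hα hβ hγ hsinα hsinβ hsinγ]
  rw [sin_sq_eq_half_sub, show 2 * ((α + β + γ) / 2) = α + β + γ by ring, cos_add_add]
  linear_combination hcot - hrcos + hcscα + hcscβ + hcscγ

end

theorem malfatti_radius_i2_A_general
    (a b c : ℝ)
    (habc : a < b + c) (hbca : b < c + a) (hcab : c < a + b)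
    (s r rA α β γ σ l m n : ℝ)
    (hs : s = (a + b + c) / 2)
    (hr : r = Real.sqrt ((s - a) * (s - b) * (s - c) / s))
    (hrA : rA = Real.sqrt (s * (s - b) * (s - c) / (s - a)))
    (hα : α ∈ Set.Ioo 0 (π / 2)) (hβ : β ∈ Set.Ioo 0 (π / 2)) (hγ : γ ∈ Set.Ioo 0 (π / 2))
    (hsinα : Real.sin α ^ 2 = a / s)
    (hsinβ : Real.sin β ^ 2 = b / s)
    (hsinγ : Real.sin γ ^ 2 = c / s)
    (hσ : σ = (α + β + γ) / 2)
    (hl : l = (s - a) / r) (hm : m = (s - b) / r) (hn : n = (s - c) / r) :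
    r * (l + m + n - 1 + Real.sqrt (l ^ 2 + 1) + Real.sqrt (m ^ 2 + 1) + Real.sqrt (n ^ 2 + 1)) / (2 * l) = rA * Real.sin σ ^ 2 := by
  have hx : 0 < s - a := by linarith
  have hy : 0 < s - b := by linarith
  have hz : 0 < s - c := by linarith
  have hs0 : 0 < s := by linarith
  have hsum : r * (l + m + n - 1 + √(l ^ 2 + 1) + √(m ^ 2 + 1) + √(n ^ 2 + 1))
      = 2 * s * sin σ ^ 2 := by
    rw [hσ, hl, hm, hn]
    exact inradius_mul_sum_cot_add_csc_eq hs hx hy hz (Ioo_subset_Icc_self hα)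
      (Ioo_subset_Icc_self hβ) (Ioo_subset_Icc_self hγ) hsinα hsinβ hsinγ hr
  have hrA_mul_l : rA * l = s := by
    rw [hrA, hl, hr, mul_div_assoc', sqrt_div_mul_eq_mul_sqrt_div hs0 hx]
    field_simp
  have hl0 : 0 < l := by rw [hl, hr]; positivity
  rw [hsum, ← hrA_mul_l]
  field_simp

theorem malfatti_radius_i2_A
    (a b c : ℝ) (ha : 0 < a) (hb : 0 < b) (hc : 0 < c)
    (habc : a < b + c) (hbca : b < c + a) (hcab : c < a + b)
    (s r rA rB rC α β γ σ l m n : ℝ)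
    (hs : s = (a + b + c) / 2)
    (hr : r = Real.sqrt ((s - a) * (s - b) * (s - c) / s))
    (hrA : rA = Real.sqrt (s * (s - b) * (s - c) / (s - a)))
    (hrB : rB = Real.sqrt (s * (s - c) * (s - a) / (s - b)))
    (hrC : rC = Real.sqrt (s * (s - a) * (s - b) / (s - c)))
    (hα : α ∈ Set.Ioo 0 (π / 2)) (hβ : β ∈ Set.Ioo 0 (π / 2)) (hγ : γ ∈ Set.Ioo 0 (π / 2))
    (hsinα : Real.sin α ^ 2 = a / s)
    (hsinβ : Real.sin β ^ 2 = b / s)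
    (hsinγ : Real.sin γ ^ 2 = c / s)
    (hσ : σ = (α + β + γ) / 2)
    (hl : l = (s - a) / r) (hm : m = (s - b) / r) (hn : n = (s - c) / r) :
    r * (l + m + n - 1 + Real.sqrt (l ^ 2 + 1) + Real.sqrt (m ^ 2 + 1) + Real.sqrt (n ^ 2 + 1)) / (2 * l) = rA * Real.sin σ ^ 2 :=
  malfatti_radius_i2_A_general a b c habc hbca hcab s r rA α β γ σ l m n hs hr hrA hα hβ hγ hsinα
    hsinβ hsinγ hσ hl hm hn
end

section
/- With the above notation, r·(l + m + n − 1 − √(l²+1) + √(m²+1) − √(n²+1))/(2l) = r_A·sin²(σ − β). -/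
/-!
Write `u² = s - a`, `v² = s - b`, `w² = s - c` and `S² = s = u² + v² + w²`. Then `cos α = u / S`,
`sin α = √a / S` (and cyclically), `r = u v w / S`, `r_A = S v w / u`, `l = u S / (v w)` and
`l² + 1 = (u² + v²)(u² + w²) / (v w)²`, so `√(l² + 1) = √b √c / (v w)`. Since
`2 (σ - β) = α - β + γ`, the half-angle formula expresses `sin² (σ - β)` through `cos (α - β + γ)`,
which expands into a rational expression in these square roots; both sides of the identity are then
rational functions of `u, v, w, S, √a, √b, √c` that agree modulo `S² = u² + v² + w²`.
-/

open Real

lemma sin_cos_eq_of_sin_sq_eq_div {θ d s : ℝ} (hθ : θ ∈ Set.Icc 0 (π / 2)) (hs : 0 < s)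
    (h : sin θ ^ 2 = d / s) : sin θ = √d / √s ∧ cos θ = √(s - d) / √s := by
  constructor
  · have hsin : 0 ≤ sin θ := sin_nonneg_of_mem_Icc ⟨hθ.1, by linarith [hθ.2, pi_pos]⟩
    rw [← sqrt_sq hsin, h, sqrt_div' d hs.le]
  · rw [cos_eq_sqrt_one_sub_sin_sq (by linarith [hθ.1, pi_pos]) hθ.2, h, one_sub_div hs.ne',
      sqrt_div' _ hs.le]

lemma sin_sq_half_add_sub (α β γ : ℝ) :
    sin ((α + β + γ) / 2 - β) ^ 2 = 1 / 2 - (cos α * cos β * cos γ - sin α * cos β * sin γ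
      + sin α * sin β * cos γ + cos α * sin β * sin γ) / 2 := by
  rw [sin_sq_eq_half_sub, show 2 * ((α + β + γ) / 2 - β) = α + γ - β by ring, cos_sub, cos_add,
    sin_add]
  ring

lemma sqrt_sq_mul_div_add_one {u v w S : ℝ} (hv : 0 < v) (hw : 0 < w)
    (hS : S ^ 2 = u ^ 2 + v ^ 2 + w ^ 2) :
    √((u * S / (v * w)) ^ 2 + 1) = √(u ^ 2 + w ^ 2) * √(u ^ 2 + v ^ 2) / (v * w) := by
  rw [← sqrt_sq (by positivity : 0 ≤ √(u ^ 2 + w ^ 2) * √(u ^ 2 + v ^ 2) / (v * w))]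
  congr 1
  rw [div_pow, mul_pow, hS, div_pow, mul_pow, mul_pow, sq_sqrt (by positivity),
    sq_sqrt (by positivity)]
  field_simp
  ring

/-- `r` is the inradius of the triangle with tangent lengths `x, y, z` and sides `b = x + z`,
`c = x + y`, so `x / r` is the `l` of the theorem. -/
lemma div_inradius_and_sqrt_sq_add_one {s x y z r b c : ℝ} (hx : 0 < x) (hy : 0 < y) (hz : 0 < z)
    (hs : s = x + y + z) (hr : r = √x * √y * √z / √s) (hb : x + z = b) (hc : x + y = c) :
    x / r = √x * √s / (√y * √z) ∧ √((x / r) ^ 2 + 1) = √b * √c / (√y * √z) := by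
  have hs0 : 0 < s := by linarith
  have hl : x / r = √x * √s / (√y * √z) := by
    rw [hr, eq_div_iff (by positivity)]
    field_simp
    rw [sq_sqrt hx.le]
  refine ⟨hl, ?_⟩
  rw [hl, sqrt_sq_mul_div_add_one (sqrt_pos.2 hy) (sqrt_pos.2 hz)
    (by rw [sq_sqrt hs0.le, sq_sqrt hx.le, sq_sqrt hy.le, sq_sqrt hz.le, hs]), sq_sqrt hx.le,
    sq_sqrt hy.le, sq_sqrt hz.le, hb, hc]

lemma malfatti_rational_identity {u v w S p q t : ℝ} (hu : 0 < u) (hv : 0 < v) (hw : 0 < w)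
    (hS : 0 < S) (hS2 : S ^ 2 = u ^ 2 + v ^ 2 + w ^ 2) :
    u * v * w / S * (u * S / (v * w) + v * S / (w * u) + w * S / (u * v) - 1
      - q * t / (v * w) + t * p / (w * u) - p * q / (u * v)) / (2 * (u * S / (v * w)))
      = S * v * w / u * (1 / 2 - (u / S * (v / S) * (w / S) - p / S * (v / S) * (t / S)
        + p / S * (q / S) * (w / S) + u / S * (q / S) * (t / S)) / 2) := by
  field_simp
  linear_combination (-S) * hS2

theorem malfatti_radius_i4_A_general
    (a b c : ℝ)
    (habc : a < b + c) (hbca : b < c + a) (hcab : c < a + b)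
    (s r rA α β γ σ l m n : ℝ)
    (hs : s = (a + b + c) / 2)
    (hr : r = Real.sqrt ((s - a) * (s - b) * (s - c) / s))
    (hrA : rA = Real.sqrt (s * (s - b) * (s - c) / (s - a)))
    (hα : α ∈ Set.Ioo 0 (π / 2)) (hβ : β ∈ Set.Ioo 0 (π / 2)) (hγ : γ ∈ Set.Ioo 0 (π / 2))
    (hsinα : Real.sin α ^ 2 = a / s)
    (hsinβ : Real.sin β ^ 2 = b / s)
    (hsinγ : Real.sin γ ^ 2 = c / s)
    (hσ : σ = (α + β + γ) / 2)
    (hl : l = (s - a) / r) (hm : m = (s - b) / r) (hn : n = (s - c) / r) :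
    r * (l + m + n - 1 - Real.sqrt (l ^ 2 + 1) + Real.sqrt (m ^ 2 + 1) - Real.sqrt (n ^ 2 + 1)) / (2 * l) = rA * Real.sin (σ - β) ^ 2 := by
  have hx : 0 < s - a := by linarith
  have hy : 0 < s - b := by linarith
  have hz : 0 < s - c := by linarith
  have hs0 : 0 < s := by linarith
  have hr' : r = √(s - a) * √(s - b) * √(s - c) / √s := by
    rw [hr, sqrt_div' _ hs0.le, sqrt_mul (by positivity), sqrt_mul hx.le]
  have hrA' : rA = √s * √(s - b) * √(s - c) / √(s - a) := by
    rw [hrA, sqrt_div' _ hx.le, sqrt_mul (by positivity), sqrt_mul hs0.le]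
  obtain ⟨hl', hsl⟩ := div_inradius_and_sqrt_sq_add_one (s := s) (b := b) (c := c) hx hy hz
    (by linarith) hr' (by linarith) (by linarith)
  obtain ⟨hm', hsm⟩ := div_inradius_and_sqrt_sq_add_one (s := s) (b := c) (c := a) hy hz hx
    (by linarith) (hr'.trans (by ring)) (by linarith) (by linarith)
  obtain ⟨hn', hsn⟩ := div_inradius_and_sqrt_sq_add_one (s := s) (b := a) (c := b) hz hx hy
    (by linarith) (hr'.trans (by ring)) (by linarith) (by linarith)
  obtain ⟨hsα, hcα⟩ := sin_cos_eq_of_sin_sq_eq_div (Set.Ioo_subset_Icc_self hα) hs0 hsinα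
  obtain ⟨hsβ, hcβ⟩ := sin_cos_eq_of_sin_sq_eq_div (Set.Ioo_subset_Icc_self hβ) hs0 hsinβ
  obtain ⟨hsγ, hcγ⟩ := sin_cos_eq_of_sin_sq_eq_div (Set.Ioo_subset_Icc_self hγ) hs0 hsinγ
  subst hl hm hn hσ
  rw [sin_sq_half_add_sub, hsα, hsβ, hsγ, hcα, hcβ, hcγ, hsl, hsm, hsn, hl', hm', hn', hr', hrA']
  refine malfatti_rational_identity (sqrt_pos.2 hx) (sqrt_pos.2 hy) (sqrt_pos.2 hz)
    (sqrt_pos.2 hs0) ?_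
  rw [sq_sqrt hs0.le, sq_sqrt hx.le, sq_sqrt hy.le, sq_sqrt hz.le]
  linarith

theorem malfatti_radius_i4_A
    (a b c : ℝ) (ha : 0 < a) (hb : 0 < b) (hc : 0 < c)
    (habc : a < b + c) (hbca : b < c + a) (hcab : c < a + b)
    (s r rA rB rC α β γ σ l m n : ℝ)
    (hs : s = (a + b + c) / 2)
    (hr : r = Real.sqrt ((s - a) * (s - b) * (s - c) / s))
    (hrA : rA = Real.sqrt (s * (s - b) * (s - c) / (s - a)))
    (hrB : rB = Real.sqrt (s * (s - c) * (s - a) / (s - b)))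
    (hrC : rC = Real.sqrt (s * (s - a) * (s - b) / (s - c)))
    (hα : α ∈ Set.Ioo 0 (π / 2)) (hβ : β ∈ Set.Ioo 0 (π / 2)) (hγ : γ ∈ Set.Ioo 0 (π / 2))
    (hsinα : Real.sin α ^ 2 = a / s)
    (hsinβ : Real.sin β ^ 2 = b / s)
    (hsinγ : Real.sin γ ^ 2 = c / s)
    (hσ : σ = (α + β + γ) / 2)
    (hl : l = (s - a) / r) (hm : m = (s - b) / r) (hn : n = (s - c) / r) :
    r * (l + m + n - 1 - Real.sqrt (l ^ 2 + 1) + Real.sqrt (m ^ 2 + 1) - Real.sqrt (n ^ 2 + 1)) / (2 * l) = rA * Real.sin (σ - β) ^ 2 :=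
  malfatti_radius_i4_A_general a b c habc hbca hcab s r rA α β γ σ l m n hs hr hrA hα hβ hγ hsinα
    hsinβ hsinγ hσ hl hm hn
end

section
/- With the above notation, r·(l + m + n + 1 − √(l²+1) + √(m²+1) + √(n²+1))/(2l) = r_A·cos²(σ − α). -/
/-!
Write `x = s - a`, `y = s - b`, `z = s - c`, so that `cos² α = x / s`, `sin² α = (y + z) / s`,
etc., and `r² s = x y z`. By the half-angle formula `cos² (σ - α) = (1 + cos (β + γ - α)) / 2`,
and expanding `cos (β + γ - α)` gives four triple products of sines and cosines. Each has square
`w / s²` with `w` one of `r²`, `x² + r²`, `y² + r²`, `z² + r²`: for instance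
`x (x + y) (x + z) = s x² + x y z = s (x² + r²)`. Together with `r_A = r s / x` and
`√(l² + 1) = √(x² + r²) / r`, both sides become `r (s + r - √(x² + r²) + √(y² + r²) + √(z² + r²)) / (2 x)`.
-/

open Real Set

lemma cos_sq_eq_div_of_sin_sq {t x s : ℝ} (hs : s ≠ 0) (h : sin t ^ 2 = (s - x) / s) :
    cos t ^ 2 = x / s := by
  rw [cos_sq', h]
  field_simp
  ring

lemma mul_mul_eq_sqrt_div {u v w p q t s : ℝ} (hu : 0 ≤ u) (hv : 0 ≤ v) (hw : 0 ≤ w)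
    (hs : 0 < s) (hu2 : u ^ 2 = p / s) (hv2 : v ^ 2 = q / s) (hw2 : w ^ 2 = t / s) :
    u * v * w = √(p * q * t / s) / s := by
  have h : p * q * t / s = (u * v * w * s) ^ 2 := by
    rw [mul_pow, mul_pow, mul_pow, hu2, hv2, hw2]
    field_simp
  rw [eq_div_iff hs.ne', h, sqrt_sq (by positivity)]

lemma sqrt_div_sq_add_one {x r : ℝ} (hr : 0 < r) : √((x / r) ^ 2 + 1) = √(x ^ 2 + r ^ 2) / r := by
  rw [show (x / r) ^ 2 + 1 = (x ^ 2 + r ^ 2) / r ^ 2 by field_simp,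
    sqrt_div' _ (sq_nonneg r), sqrt_sq hr.le]

lemma sqrt_mul_mul_div_eq {x y z s r : ℝ} (hx : 0 < x) (hs : 0 < s) (hr : 0 ≤ r)
    (hr2 : r ^ 2 * s = x * y * z) : √(s * y * z / x) = r * s / x := by
  rw [show s * y * z / x = (r * s / x) ^ 2 by field_simp; linear_combination -hr2,
    sqrt_sq (by positivity)]

lemma cos_add_sub_eq_of_sin_sq {x y z s r α β γ : ℝ} (hs : 0 < s) (hxyz : x + y + z = s)
    (hr2 : r ^ 2 * s = x * y * z) (hr : 0 ≤ r)
    (hα : α ∈ Icc 0 (π / 2)) (hβ : β ∈ Icc 0 (π / 2)) (hγ : γ ∈ Icc 0 (π / 2))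
    (hsα : sin α ^ 2 = (s - x) / s) (hsβ : sin β ^ 2 = (s - y) / s)
    (hsγ : sin γ ^ 2 = (s - z) / s) :
    cos (β + γ - α) = (r - √(x ^ 2 + r ^ 2) + √(y ^ 2 + r ^ 2) + √(z ^ 2 + r ^ 2)) / s := by
  have hsin {t : ℝ} (ht : t ∈ Icc 0 (π / 2)) : 0 ≤ sin t :=
    sin_nonneg_of_nonneg_of_le_pi ht.1 (by linarith [ht.2, pi_pos])
  have hcos {t : ℝ} (ht : t ∈ Icc 0 (π / 2)) : 0 ≤ cos t :=
    cos_nonneg_of_mem_Icc ⟨by linarith [ht.1, pi_pos], ht.2⟩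
  have hcα := cos_sq_eq_div_of_sin_sq hs.ne' hsα
  have hcβ := cos_sq_eq_div_of_sin_sq hs.ne' hsβ
  have hcγ := cos_sq_eq_div_of_sin_sq hs.ne' hsγ
  have hccc : cos α * cos β * cos γ = √(r ^ 2) / s := by
    rw [mul_mul_eq_sqrt_div (hcos hα) (hcos hβ) (hcos hγ) hs hcα hcβ hcγ]
    congr 2
    field_simp
    linear_combination -hr2
  have hcss : cos α * sin β * sin γ = √(x ^ 2 + r ^ 2) / s := by
    rw [mul_mul_eq_sqrt_div (hcos hα) (hsin hβ) (hsin hγ) hs hcα hsβ hsγ]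
    congr 2
    field_simp
    subst hxyz
    linear_combination -hr2
  have hscs : sin α * cos β * sin γ = √(y ^ 2 + r ^ 2) / s := by
    rw [mul_mul_eq_sqrt_div (hsin hα) (hcos hβ) (hsin hγ) hs hsα hcβ hsγ]
    congr 2
    field_simp
    subst hxyz
    linear_combination -hr2
  have hssc : sin α * sin β * cos γ = √(z ^ 2 + r ^ 2) / s := by
    rw [mul_mul_eq_sqrt_div (hsin hα) (hsin hβ) (hcos hγ) hs hsα hsβ hcγ]
    congr 2
    field_simp
    subst hxyz
    linear_combination -hr2
  have expand : cos (β + γ - α) = cos α * cos β * cos γ - cos α * sin β * sin γ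
      + sin α * cos β * sin γ + sin α * sin β * cos γ := by
    rw [cos_sub, cos_add, sin_add]
    ring
  rw [expand, hccc, hcss, hscs, hssc, sqrt_sq hr]
  ring

theorem malfatti_radius_i5_A_general
    (a b c : ℝ)
    (habc : a < b + c) (hbca : b < c + a) (hcab : c < a + b)
    (s r rA α β γ σ l m n : ℝ)
    (hs : s = (a + b + c) / 2)
    (hr : r = Real.sqrt ((s - a) * (s - b) * (s - c) / s))
    (hrA : rA = Real.sqrt (s * (s - b) * (s - c) / (s - a)))
    (hα : α ∈ Set.Ioo 0 (π / 2)) (hβ : β ∈ Set.Ioo 0 (π / 2)) (hγ : γ ∈ Set.Ioo 0 (π / 2))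
    (hsinα : Real.sin α ^ 2 = a / s)
    (hsinβ : Real.sin β ^ 2 = b / s)
    (hsinγ : Real.sin γ ^ 2 = c / s)
    (hσ : σ = (α + β + γ) / 2)
    (hl : l = (s - a) / r) (hm : m = (s - b) / r) (hn : n = (s - c) / r) :
    r * (l + m + n + 1 - Real.sqrt (l ^ 2 + 1) + Real.sqrt (m ^ 2 + 1) + Real.sqrt (n ^ 2 + 1)) / (2 * l) = rA * Real.cos (σ - α) ^ 2 := by
  have hs0 : 0 < s := by rw [hs]; linarith
  have hx : 0 < s - a := by rw [hs]; linarith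
  have hy : 0 < s - b := by rw [hs]; linarith
  have hz : 0 < s - c := by rw [hs]; linarith
  have hxyz : (s - a) + (s - b) + (s - c) = s := by rw [hs]; ring
  have hr2 : r ^ 2 * s = (s - a) * (s - b) * (s - c) := by
    rw [hr, sq_sqrt (by positivity)]
    field_simp
  have hr0 : 0 < r := by rw [hr]; positivity
  have hcos := cos_add_sub_eq_of_sin_sq hs0 hxyz hr2 hr0.le
    (Ioo_subset_Icc_self hα) (Ioo_subset_Icc_self hβ) (Ioo_subset_Icc_self hγ)
    (by rwa [sub_sub_cancel]) (by rwa [sub_sub_cancel]) (by rwa [sub_sub_cancel])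
  rw [hl, hm, hn, sqrt_div_sq_add_one hr0, sqrt_div_sq_add_one hr0, sqrt_div_sq_add_one hr0,
    cos_sq, show 2 * (σ - α) = β + γ - α by rw [hσ]; ring, hcos,
    hrA, sqrt_mul_mul_div_eq hx hs0 hr0.le hr2]
  field_simp
  linear_combination hxyz

theorem malfatti_radius_i5_A
    (a b c : ℝ) (ha : 0 < a) (hb : 0 < b) (hc : 0 < c)
    (habc : a < b + c) (hbca : b < c + a) (hcab : c < a + b)
    (s r rA rB rC α β γ σ l m n : ℝ)
    (hs : s = (a + b + c) / 2)
    (hr : r = Real.sqrt ((s - a) * (s - b) * (s - c) / s))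
    (hrA : rA = Real.sqrt (s * (s - b) * (s - c) / (s - a)))
    (hrB : rB = Real.sqrt (s * (s - c) * (s - a) / (s - b)))
    (hrC : rC = Real.sqrt (s * (s - a) * (s - b) / (s - c)))
    (hα : α ∈ Set.Ioo 0 (π / 2)) (hβ : β ∈ Set.Ioo 0 (π / 2)) (hγ : γ ∈ Set.Ioo 0 (π / 2))
    (hsinα : Real.sin α ^ 2 = a / s)
    (hsinβ : Real.sin β ^ 2 = b / s)
    (hsinγ : Real.sin γ ^ 2 = c / s)
    (hσ : σ = (α + β + γ) / 2)
    (hl : l = (s - a) / r) (hm : m = (s - b) / r) (hn : n = (s - c) / r) :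
    r * (l + m + n + 1 - Real.sqrt (l ^ 2 + 1) + Real.sqrt (m ^ 2 + 1) + Real.sqrt (n ^ 2 + 1)) / (2 * l) = rA * Real.cos (σ - α) ^ 2 :=
  malfatti_radius_i5_A_general a b c habc hbca hcab s r rA α β γ σ l m n hs hr hrA hα hβ hγ hsinα
    hsinβ hsinγ hσ hl hm hn
end

section
/- With the above notation, r·(l + m + n − 1 − √(l²+1) + √(m²+1) − √(n²+1))/(2m) = r_B·sin²(σ − β). -/
open Real

/-- Helper: `s * (√(u/s) * √(v/s) * √(w/s)) = √(u*v*w/s)` for nonneg inputs. -/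
lemma malfatti_sqrt3_aux (s u v w : ℝ) (hs : 0 < s) (hu : 0 ≤ u) (hv : 0 ≤ v) (hw : 0 ≤ w) :
    s * (Real.sqrt (u / s) * Real.sqrt (v / s) * Real.sqrt (w / s))
      = Real.sqrt (u * v * w / s) := by
  rw [← Real.sqrt_mul (by positivity), ← Real.sqrt_mul (by positivity)]
  nth_rewrite 1 [← Real.sqrt_sq hs.le]
  rw [← Real.sqrt_mul (by positivity)]
  congr 1
  field_simp

/-- Helper: sin/cos values for an angle in (0, π/2) with prescribed sin². -/
lemma malfatti_trig_aux (θ t u : ℝ) (hθ : θ ∈ Set.Ioo 0 (π / 2)) (hu : 0 < u)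
    (ht : Real.sin θ ^ 2 = t / u) :
    Real.sin θ = Real.sqrt (t / u) ∧ Real.cos θ = Real.sqrt ((u - t) / u) := by
  have hsin : 0 ≤ Real.sin θ :=
    Real.sin_nonneg_of_nonneg_of_le_pi hθ.1.le (by linarith [hθ.2, Real.pi_pos])
  have hcos : 0 < Real.cos θ := Real.cos_pos_of_mem_Ioo ⟨by linarith [hθ.1, Real.pi_pos], hθ.2⟩
  constructor
  · rw [← ht, Real.sqrt_sq hsin]
  · have h2 := Real.sin_sq_add_cos_sq θ
    rw [ht] at h2
    have hc2 : Real.cos θ ^ 2 = (u - t) / u := by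
      field_simp at h2 ⊢
      linarith
    rw [← hc2, Real.sqrt_sq hcos.le]

theorem malfatti_radius_i1_B
    (a b c : ℝ) (ha : 0 < a) (hb : 0 < b) (hc : 0 < c)
    (habc : a < b + c) (hbca : b < c + a) (hcab : c < a + b)
    (s r rA rB rC α β γ σ l m n : ℝ)
    (hs : s = (a + b + c) / 2)
    (hr : r = Real.sqrt ((s - a) * (s - b) * (s - c) / s))
    (hrA : rA = Real.sqrt (s * (s - b) * (s - c) / (s - a)))
    (hrB : rB = Real.sqrt (s * (s - c) * (s - a) / (s - b)))
    (hrC : rC = Real.sqrt (s * (s - a) * (s - b) / (s - c)))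
    (hα : α ∈ Set.Ioo 0 (π / 2)) (hβ : β ∈ Set.Ioo 0 (π / 2)) (hγ : γ ∈ Set.Ioo 0 (π / 2))
    (hsinα : Real.sin α ^ 2 = a / s)
    (hsinβ : Real.sin β ^ 2 = b / s)
    (hsinγ : Real.sin γ ^ 2 = c / s)
    (hσ : σ = (α + β + γ) / 2)
    (hl : l = (s - a) / r) (hm : m = (s - b) / r) (hn : n = (s - c) / r) :
    r * (l + m + n - 1 - Real.sqrt (l ^ 2 + 1) + Real.sqrt (m ^ 2 + 1) - Real.sqrt (n ^ 2 + 1)) / (2 * m) = rB * Real.sin (σ - β) ^ 2 := by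
  have hs0 : 0 < s := by rw [hs]; linarith
  have hxa : 0 < s - a := by rw [hs]; linarith
  have hxb : 0 < s - b := by rw [hs]; linarith
  have hxc : 0 < s - c := by rw [hs]; linarith
  have hr0 : 0 < r := by rw [hr]; exact Real.sqrt_pos.mpr (by positivity)
  have hr2 : r ^ 2 = (s - a) * (s - b) * (s - c) / s := by
    rw [hr, Real.sq_sqrt (by positivity)]
  obtain ⟨hsa, hca⟩ := malfatti_trig_aux α a s hα hs0 hsinα
  obtain ⟨hsb, hcb⟩ := malfatti_trig_aux β b s hβ hs0 hsinβ
  obtain ⟨hsc, hcc⟩ := malfatti_trig_aux γ c s hγ hs0 hsinγ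
  -- r = s cosα cosβ cosγ
  have H4 : r = s * (Real.cos α * Real.cos β * Real.cos γ) := by
    rw [hca, hcb, hcc, malfatti_sqrt3_aux s _ _ _ hs0 hxa.le hxb.le hxc.le, hr]
  -- generic sqrt computation
  have key : ∀ u P t : ℝ, 0 < u → 0 ≤ P → t = u / r →
      s * u ^ 2 + (s - a) * (s - b) * (s - c) = P →
      r * Real.sqrt (t ^ 2 + 1) = Real.sqrt (P / s) := by
    intro u P t hu hP htdef hid
    have h1 : u ^ 2 + r ^ 2 = P / s := by
      rw [hr2]
      field_simp
      linear_combination hid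
    have harg : t ^ 2 + 1 = (P / s) / r ^ 2 := by
      rw [htdef, div_pow, ← h1, add_div, div_self (pow_ne_zero 2 hr0.ne')]
    rw [harg, Real.sqrt_div (by positivity), Real.sqrt_sq hr0.le]
    field_simp
  have H1 : r * Real.sqrt (l ^ 2 + 1) = s * (Real.cos α * Real.sin β * Real.sin γ) := by
    rw [hca, hsb, hsc, malfatti_sqrt3_aux s _ _ _ hs0 hxa.le hb.le hc.le]
    exact key (s - a) ((s - a) * b * c) l hxa (by positivity) hl (by rw [hs]; ring)
  have H2 : r * Real.sqrt (m ^ 2 + 1) = s * (Real.sin α * Real.cos β * Real.sin γ) := by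
    rw [hsa, hcb, hsc, malfatti_sqrt3_aux s _ _ _ hs0 ha.le hxb.le hc.le]
    exact key (s - b) (a * (s - b) * c) m hxb (by positivity) hm (by rw [hs]; ring)
  have H3 : r * Real.sqrt (n ^ 2 + 1) = s * (Real.sin α * Real.sin β * Real.cos γ) := by
    rw [hsa, hsb, hcc, malfatti_sqrt3_aux s _ _ _ hs0 ha.le hb.le hxc.le]
    exact key (s - c) (a * b * (s - c)) n hxc (by positivity) hn (by rw [hs]; ring)
  have H5 : r * (l + m + n) = s := by
    rw [hl, hm, hn, hs]
    field_simp
    ring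
  have H6 : rB = s * r / (s - b) := by
    have : s * (s - c) * (s - a) / (s - b) = (s * r / (s - b)) ^ 2 := by
      rw [div_pow, mul_pow, hr2]; field_simp
    rw [hrB, this, Real.sqrt_sq (by positivity)]
  have H7 : Real.sin (σ - β) ^ 2 = 1 / 2 -
      ((Real.cos α * Real.cos γ - Real.sin α * Real.sin γ) * Real.cos β
        + (Real.sin α * Real.cos γ + Real.cos α * Real.sin γ) * Real.sin β) / 2 := by
    have h1 : σ - β = (α + γ - β) / 2 := by rw [hσ]; ring
    rw [h1, Real.sin_sq_eq_half_sub,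
      show 2 * ((α + γ - β) / 2) = (α + γ) - β from by ring,
      Real.cos_sub, Real.cos_add, Real.sin_add]
  -- numerator equals 2 s sin²(σ-β)
  have hnum : r * (l + m + n - 1 - Real.sqrt (l ^ 2 + 1) + Real.sqrt (m ^ 2 + 1)
      - Real.sqrt (n ^ 2 + 1)) = 2 * s * Real.sin (σ - β) ^ 2 := by
    have e : r * (l + m + n - 1 - Real.sqrt (l ^ 2 + 1) + Real.sqrt (m ^ 2 + 1)
        - Real.sqrt (n ^ 2 + 1)) = r * (l + m + n) - r - r * Real.sqrt (l ^ 2 + 1)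
        + r * Real.sqrt (m ^ 2 + 1) - r * Real.sqrt (n ^ 2 + 1) := by ring
    rw [e, H5, H1, H2, H3, H7]
    nth_rewrite 1 [H4]
    ring
  rw [hnum, hm, H6]
  field_simp
end

section
/- With the above notation, r_A·(√(l²+1) − √(m̄²+1) − √(n̄²+1) + l − m̄ − n̄ + 1)/(2l) = r·cosh²(σ_A − α_A). -/
/-!
With x = s - a, y = s - b, z = s - c every quantity in sight is a ratio of square roots:
r_A = √s√y√z/√x, l = √s√x/(√y√z), and √(l² + 1) = √b√c/(√y√z) because sx + yz = bc
(similarly for m̄, n̄); the pairs (sinh, cosh) of α_A, β_A, γ_A are (√a, √s), (√z, √b), (√y, √c)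
divided by √x.
Writing cosh²(σ_A - α_A) = (1 + cosh(β_A + γ_A - α_A))/2 and expanding by the addition formulas,
both sides become rational functions of these roots which agree modulo s = x + y + z.
-/

open Real

lemma Real.sqrt_mul_mul_div {p q w : ℝ} (hp : 0 ≤ p) (hq : 0 ≤ q) (hw : 0 ≤ w) (v : ℝ) :
    √(p * q * v / w) = √p * √q * √v / √w := by
  rw [sqrt_div' _ hw, sqrt_mul (mul_nonneg hp hq), sqrt_mul hp]

lemma Real.sqrt_ratio_sq_add_one {p q v w m n : ℝ} (hp : 0 ≤ p) (hq : 0 ≤ q) (hv : 0 < v)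
    (hw : 0 < w) (hm : 0 ≤ m) (h : p * q + v * w = m * n) :
    √((√p * √q / (√v * √w)) ^ 2 + 1) = √m * √n / (√v * √w) := by
  have hvw : 0 < v * w := mul_pos hv hw
  rw [← sqrt_mul hp, ← sqrt_mul hv.le, ← sqrt_mul hm, ← sqrt_div' _ hvw.le,
    sq_sqrt (by positivity), div_add_one hvw.ne', h, sqrt_div' _ hvw.le]

lemma Real.sinh_eq_sqrt_div {t p q : ℝ} (ht : 0 ≤ t) (hq : 0 ≤ q) (h : sinh t ^ 2 = p / q) :
    sinh t = √p / √q := by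
  rw [← sqrt_div' _ hq, ← h, sqrt_sq (sinh_nonneg_iff.2 ht)]

lemma Real.cosh_eq_sqrt_div {t p q m : ℝ} (hq : 0 < q) (h : sinh t ^ 2 = p / q) (hm : p + q = m) :
    cosh t = √m / √q := by
  rw [← sqrt_div' _ hq.le, ← sqrt_sq (cosh_pos t).le, cosh_sq, h, div_add_one hq.ne', hm]

lemma Real.cosh_sq_half_add_sub (α β γ : ℝ) :
    cosh ((α + β + γ) / 2 - α) ^ 2 =
      (1 + (cosh β * cosh γ + sinh β * sinh γ) * cosh α
        - (sinh β * cosh γ + cosh β * sinh γ) * sinh α) / 2 := by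
  have h : cosh (2 * ((α + β + γ) / 2 - α)) =
      (cosh β * cosh γ + sinh β * sinh γ) * cosh α
        - (sinh β * cosh γ + cosh β * sinh γ) * sinh α := by
    rw [show 2 * ((α + β + γ) / 2 - α) = β + γ - α by ring, cosh_sub, cosh_add, sinh_add]
  rw [cosh_two_mul, sinh_sq] at h
  linarith

theorem malfatti_radius_a1_general
    (a b c : ℝ) (ha : 0 < a) (hb : 0 < b) (hc : 0 < c)
    (habc : a < b + c) (hbca : b < c + a) (hcab : c < a + b)
    (s r rA αA βA γA σA l mb nb : ℝ)
    (hs : s = (a + b + c) / 2)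
    (hr : r = Real.sqrt ((s - a) * (s - b) * (s - c) / s))
    (hrA : rA = Real.sqrt (s * (s - b) * (s - c) / (s - a)))
    (hαA : 0 < αA) (hβA : 0 < βA) (hγA : 0 < γA)
    (hsinhα : Real.sinh αA ^ 2 = a / (s - a))
    (hsinhβ : Real.sinh βA ^ 2 = (s - c) / (s - a))
    (hsinhγ : Real.sinh γA ^ 2 = (s - b) / (s - a))
    (hσA : σA = (αA + βA + γA) / 2)
    (hl : l = s / rA) (hm : mb = (s - c) / rA) (hn : nb = (s - b) / rA) :
    rA * (Real.sqrt (l ^ 2 + 1) - Real.sqrt (mb ^ 2 + 1) - Real.sqrt (nb ^ 2 + 1) + l - mb - nb + 1) / (2 * l) = r * Real.cosh (σA - αA) ^ 2 := by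
  have hx : 0 < s - a := by rw [hs]; linarith
  have hy : 0 < s - b := by rw [hs]; linarith
  have hz : 0 < s - c := by rw [hs]; linarith
  have hs0 : 0 < s := by linarith
  have hrA' : rA = √s * √(s - b) * √(s - c) / √(s - a) :=
    hrA.trans (sqrt_mul_mul_div hs0.le hy.le hx.le _)
  have hl' : l = √s * √(s - a) / (√(s - b) * √(s - c)) := by
    rw [hl, hrA']; field_simp; exact (sq_sqrt hs0.le).symm
  have hm' : mb = √(s - a) * √(s - c) / (√s * √(s - b)) := by
    rw [hm, hrA']; field_simp; exact (sq_sqrt hz.le).symm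
  have hn' : nb = √(s - a) * √(s - b) / (√s * √(s - c)) := by
    rw [hn, hrA']; field_simp; exact (sq_sqrt hy.le).symm
  rw [hl', hm', hn',
    sqrt_ratio_sq_add_one (n := c) hs0.le hx.le hy hz hb.le (by rw [hs]; ring),
    sqrt_ratio_sq_add_one (n := a) hx.le hz.le hs0 hy hc.le (by rw [hs]; ring),
    sqrt_ratio_sq_add_one (n := b) hx.le hy.le hs0 hz ha.le (by rw [hs]; ring)]
  rw [hσA, cosh_sq_half_add_sub,
    sinh_eq_sqrt_div hαA.le hx.le hsinhα, cosh_eq_sqrt_div (m := s) hx hsinhα (by ring),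
    sinh_eq_sqrt_div hβA.le hx.le hsinhβ, cosh_eq_sqrt_div (m := b) hx hsinhβ (by rw [hs]; ring),
    sinh_eq_sqrt_div hγA.le hx.le hsinhγ, cosh_eq_sqrt_div (m := c) hx hsinhγ (by rw [hs]; ring)]
  rw [hrA', hr, sqrt_mul_mul_div hx.le hy.le hs0.le]
  field_simp
  linear_combination √(s - a) * (sq_sqrt hs0.le - sq_sqrt hx.le - sq_sqrt hy.le - sq_sqrt hz.le
    - 2 * hs)

theorem malfatti_radius_a1
    (a b c : ℝ) (ha : 0 < a) (hb : 0 < b) (hc : 0 < c)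
    (habc : a < b + c) (hbca : b < c + a) (hcab : c < a + b)
    (s r rA rC αA βA γA σA l mb nb : ℝ)
    (hs : s = (a + b + c) / 2)
    (hr : r = Real.sqrt ((s - a) * (s - b) * (s - c) / s))
    (hrA : rA = Real.sqrt (s * (s - b) * (s - c) / (s - a)))
    (hrC : rC = Real.sqrt (s * (s - a) * (s - b) / (s - c)))
    (hαA : 0 < αA) (hβA : 0 < βA) (hγA : 0 < γA)
    (hsinhα : Real.sinh αA ^ 2 = a / (s - a))
    (hsinhβ : Real.sinh βA ^ 2 = (s - c) / (s - a))
    (hsinhγ : Real.sinh γA ^ 2 = (s - b) / (s - a))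
    (hσA : σA = (αA + βA + γA) / 2)
    (hl : l = s / rA) (hm : mb = (s - c) / rA) (hn : nb = (s - b) / rA) :
    rA * (Real.sqrt (l ^ 2 + 1) - Real.sqrt (mb ^ 2 + 1) - Real.sqrt (nb ^ 2 + 1) + l - mb - nb + 1) / (2 * l) = r * Real.cosh (σA - αA) ^ 2 :=
  malfatti_radius_a1_general a b c ha hb hc habc hbca hcab s r rA αA βA γA σA l mb nb hs hr hrA hαA
    hβA hγA hsinhα hsinhβ hsinhγ hσA hl hm hn
end

section
/- With the above notation, r_A·(√(l²+1) + √(m̄²+1) + √(n̄²+1) + l − m̄ − n̄ + 1)/(2l) = r·cosh²σ_A. -/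
/-!
With `x = s - a`, `y = s - b`, `z = s - c` one has `cosh α_A = √(s/x)`, `cosh β_A = √(b/x)`,
`cosh γ_A = √(c/x)`, `sinh β_A = √(z/x)`, `sinh γ_A = √(y/x)`, and
`l² + 1 = bc/(yz)`, `m̄² + 1 = ca/(sy)`, `n̄² + 1 = ab/(sz)` (three instances of
`s·u + v·w = (u + v)(u + w)` for `{u, v, w} = {x, y, z}`) and `l - m̄ - n̄ = x/r_A`.
Since `cosh² σ_A = (cosh (α_A + β_A + γ_A) + 1)/2`, expanding the cosh of the triple sum turns
both sides into the same rational expression in `√s, √a, √b, √c, √x, √y, √z`.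
-/

open Real

namespace Real

theorem sinh_eq_sqrt_div_of_sinh_sq_eq {t u v : ℝ} (ht : 0 ≤ t) (hv : 0 ≤ v)
    (h : sinh t ^ 2 = u / v) : sinh t = √u / √v := by
  rw [← sqrt_div' u hv, ← h, sqrt_sq (sinh_nonneg_iff.2 ht)]

theorem cosh_eq_sqrt_div_of_sinh_sq_eq {t u v : ℝ} (hv : 0 < v) (h : sinh t ^ 2 = u / v) :
    cosh t = √(u + v) / √v := by
  rw [← sqrt_div' _ hv.le, add_div, div_self hv.ne', ← h, ← cosh_sq, sqrt_sq (cosh_pos t).le]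

theorem cosh_add_add (x y z : ℝ) :
    cosh (x + y + z) = cosh x * cosh y * cosh z + cosh x * sinh y * sinh z +
      sinh x * cosh y * sinh z + sinh x * sinh y * cosh z := by
  rw [cosh_add, cosh_add, sinh_add]
  ring

theorem cosh_sq_half (x : ℝ) : cosh (x / 2) ^ 2 = (cosh x + 1) / 2 := by
  have h := cosh_two_mul (x / 2)
  rw [mul_div_cancel₀ x two_ne_zero] at h
  linarith [cosh_sq (x / 2)]

theorem cosh_add_add_eq_of_sinh_sq_eq {x y z u v w d : ℝ} (hx : 0 ≤ x) (hy : 0 ≤ y) (hz : 0 ≤ z)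
    (hd : 0 < d) (hux : sinh x ^ 2 = u / d) (hvy : sinh y ^ 2 = v / d) (hwz : sinh z ^ 2 = w / d) :
    cosh (x + y + z) = (√(u + d) * √(v + d) * √(w + d) + √(u + d) * √v * √w +
      √u * √(v + d) * √w + √u * √v * √(w + d)) / √d ^ 3 := by
  rw [cosh_add_add, cosh_eq_sqrt_div_of_sinh_sq_eq hd hux, cosh_eq_sqrt_div_of_sinh_sq_eq hd hvy,
    cosh_eq_sqrt_div_of_sinh_sq_eq hd hwz, sinh_eq_sqrt_div_of_sinh_sq_eq hx hd.le hux,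
    sinh_eq_sqrt_div_of_sinh_sq_eq hy hd.le hvy, sinh_eq_sqrt_div_of_sinh_sq_eq hz hd.le hwz]
  ring

theorem sqrt_mul_mul_div_s15 {x y z : ℝ} (hx : 0 ≤ x) (hy : 0 ≤ y) (hz : 0 ≤ z) (w : ℝ) :
    √(x * y * z / w) = √x * √y * √z / √w := by
  rw [sqrt_div (by positivity), sqrt_mul (mul_nonneg hx hy), sqrt_mul hx]

end Real

theorem exradius_malfatti_expression_eq {a b c s r rA l m n : ℝ} (hs : s = (a + b + c) / 2)
    (hx : 0 < s - a) (hy : 0 < s - b) (hz : 0 < s - c)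
    (hr : r = √((s - a) * (s - b) * (s - c) / s))
    (hrA : rA = √(s * (s - b) * (s - c) / (s - a)))
    (hl : l = s / rA) (hm : m = (s - c) / rA) (hn : n = (s - b) / rA) :
    rA * (√(l ^ 2 + 1) + √(m ^ 2 + 1) + √(n ^ 2 + 1) + l - m - n + 1) / (2 * l) =
      r * (((√s * √b * √c + √s * √(s - c) * √(s - b) + √a * √b * √(s - b) +
        √a * √(s - c) * √c) / √(s - a) ^ 3 + 1) / 2) := by
  have hs0 : 0 < s := by linarith
  have ha : 0 < a := by linarith
  have hb : 0 < b := by linarith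
  have hc : 0 < c := by linarith
  have hrA0 : 0 < rA := by rw [hrA]; positivity
  have hrA2 : rA ^ 2 = s * (s - b) * (s - c) / (s - a) := by rw [hrA, sq_sqrt (by positivity)]
  have hl2 : l ^ 2 + 1 = b * c / ((s - b) * (s - c)) := by
    rw [hl, div_pow, hrA2]; field_simp; rw [hs]; ring
  have hm2 : m ^ 2 + 1 = c * a / (s * (s - b)) := by
    rw [hm, div_pow, hrA2]; field_simp; rw [hs]; ring
  have hn2 : n ^ 2 + 1 = a * b / (s * (s - c)) := by
    rw [hn, div_pow, hrA2]; field_simp; rw [hs]; ring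
  have hlmn : l - m - n = (s - a) / rA := by rw [hl, hm, hn, hs]; ring
  rw [add_sub_assoc, add_sub_assoc, hlmn, hl2, hm2, hn2, hl, hr, hrA,
    sqrt_mul_mul_div_s15 hx.le hy.le hz.le, sqrt_mul_mul_div_s15 hs0.le hy.le hz.le]
  simp only [sqrt_div (mul_pos hb hc).le, sqrt_div (mul_pos hc ha).le, sqrt_div (mul_pos ha hb).le,
    sqrt_mul hb.le, sqrt_mul hc.le, sqrt_mul ha.le, sqrt_mul hs0.le, sqrt_mul hy.le]
  field_simp
  rw [sq_sqrt hs0.le, pow_succ, sq_sqrt hx.le]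
  ring

theorem malfatti_radius_a2_general
    (a b c : ℝ)
    (habc : a < b + c) (hbca : b < c + a) (hcab : c < a + b)
    (s r rA αA βA γA σA l mb nb : ℝ)
    (hs : s = (a + b + c) / 2)
    (hr : r = Real.sqrt ((s - a) * (s - b) * (s - c) / s))
    (hrA : rA = Real.sqrt (s * (s - b) * (s - c) / (s - a)))
    (hαA : 0 < αA) (hβA : 0 < βA) (hγA : 0 < γA)
    (hsinhα : Real.sinh αA ^ 2 = a / (s - a))
    (hsinhβ : Real.sinh βA ^ 2 = (s - c) / (s - a))
    (hsinhγ : Real.sinh γA ^ 2 = (s - b) / (s - a))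
    (hσA : σA = (αA + βA + γA) / 2)
    (hl : l = s / rA) (hm : mb = (s - c) / rA) (hn : nb = (s - b) / rA) :
    rA * (Real.sqrt (l ^ 2 + 1) + Real.sqrt (mb ^ 2 + 1) + Real.sqrt (nb ^ 2 + 1) + l - mb - nb + 1) / (2 * l) = r * Real.cosh σA ^ 2 := by
  have hx : 0 < s - a := by rw [hs]; linarith
  have hy : 0 < s - b := by rw [hs]; linarith
  have hz : 0 < s - c := by rw [hs]; linarith
  rw [exradius_malfatti_expression_eq hs hx hy hz hr hrA hl hm hn, hσA, cosh_sq_half,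
    cosh_add_add_eq_of_sinh_sq_eq hαA.le hβA.le hγA.le hx hsinhα hsinhβ hsinhγ,
    show a + (s - a) = s by ring, show s - c + (s - a) = b by rw [hs]; ring,
    show s - b + (s - a) = c by rw [hs]; ring]

theorem malfatti_radius_a2
    (a b c : ℝ) (ha : 0 < a) (hb : 0 < b) (hc : 0 < c)
    (habc : a < b + c) (hbca : b < c + a) (hcab : c < a + b)
    (s r rA rC αA βA γA σA l mb nb : ℝ)
    (hs : s = (a + b + c) / 2)
    (hr : r = Real.sqrt ((s - a) * (s - b) * (s - c) / s))
    (hrA : rA = Real.sqrt (s * (s - b) * (s - c) / (s - a)))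
    (hrC : rC = Real.sqrt (s * (s - a) * (s - b) / (s - c)))
    (hαA : 0 < αA) (hβA : 0 < βA) (hγA : 0 < γA)
    (hsinhα : Real.sinh αA ^ 2 = a / (s - a))
    (hsinhβ : Real.sinh βA ^ 2 = (s - c) / (s - a))
    (hsinhγ : Real.sinh γA ^ 2 = (s - b) / (s - a))
    (hσA : σA = (αA + βA + γA) / 2)
    (hl : l = s / rA) (hm : mb = (s - c) / rA) (hn : nb = (s - b) / rA) :
    rA * (Real.sqrt (l ^ 2 + 1) + Real.sqrt (mb ^ 2 + 1) + Real.sqrt (nb ^ 2 + 1) + l - mb - nb + 1) / (2 * l) = r * Real.cosh σA ^ 2 :=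
  malfatti_radius_a2_general a b c habc hbca hcab s r rA αA βA γA σA l mb nb hs hr hrA hαA hβA hγA
    hsinhα hsinhβ hsinhγ hσA hl hm hn
end

section
/- With the above notation, r_A·(√(l²+1) − √(m̄²+1) − √(n̄²+1) − l + m̄ + n̄ + 1)/(2l) = r·sinh²(σ_A − α_A). -/
open Real

set_option maxHeartbeats 2000000 in
theorem malfatti_radius_a5
    (a b c : ℝ) (ha : 0 < a) (hb : 0 < b) (hc : 0 < c)
    (habc : a < b + c) (hbca : b < c + a) (hcab : c < a + b)
    (s r rA rC αA βA γA σA l mb nb : ℝ)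
    (hs : s = (a + b + c) / 2)
    (hr : r = Real.sqrt ((s - a) * (s - b) * (s - c) / s))
    (hrA : rA = Real.sqrt (s * (s - b) * (s - c) / (s - a)))
    (hrC : rC = Real.sqrt (s * (s - a) * (s - b) / (s - c)))
    (hαA : 0 < αA) (hβA : 0 < βA) (hγA : 0 < γA)
    (hsinhα : Real.sinh αA ^ 2 = a / (s - a))
    (hsinhβ : Real.sinh βA ^ 2 = (s - c) / (s - a))
    (hsinhγ : Real.sinh γA ^ 2 = (s - b) / (s - a))
    (hσA : σA = (αA + βA + γA) / 2)
    (hl : l = s / rA) (hm : mb = (s - c) / rA) (hn : nb = (s - b) / rA) :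
    rA * (Real.sqrt (l ^ 2 + 1) - Real.sqrt (mb ^ 2 + 1) - Real.sqrt (nb ^ 2 + 1) - l + mb + nb + 1) / (2 * l) = r * Real.sinh (σA - αA) ^ 2 := by
  have hX : 0 < s - a := by rw [hs]; linarith
  have hY : 0 < s - b := by rw [hs]; linarith
  have hZ : 0 < s - c := by rw [hs]; linarith
  have hS0 : 0 < s := by rw [hs]; linarith
  set pa := Real.sqrt a with hpa
  set pb := Real.sqrt b with hpb
  set pc := Real.sqrt c with hpc
  set px := Real.sqrt (s - a) with hpxd
  set py := Real.sqrt (s - b) with hpyd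
  set pz := Real.sqrt (s - c) with hpzd
  set ps := Real.sqrt s with hpsd
  have hpa2 : pa ^ 2 = a := Real.sq_sqrt ha.le
  have hpb2 : pb ^ 2 = b := Real.sq_sqrt hb.le
  have hpc2 : pc ^ 2 = c := Real.sq_sqrt hc.le
  have hpx2 : px ^ 2 = s - a := Real.sq_sqrt hX.le
  have hpy2 : py ^ 2 = s - b := Real.sq_sqrt hY.le
  have hpz2 : pz ^ 2 = s - c := Real.sq_sqrt hZ.le
  have hps2 : ps ^ 2 = s := Real.sq_sqrt hS0.le
  have hpa0 : 0 < pa := Real.sqrt_pos.mpr ha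
  have hpb0 : 0 < pb := Real.sqrt_pos.mpr hb
  have hpc0 : 0 < pc := Real.sqrt_pos.mpr hc
  have hpx0 : 0 < px := Real.sqrt_pos.mpr hX
  have hpy0 : 0 < py := Real.sqrt_pos.mpr hY
  have hpz0 : 0 < pz := Real.sqrt_pos.mpr hZ
  have hps0 : 0 < ps := Real.sqrt_pos.mpr hS0
  have hxne : px ≠ 0 := hpx0.ne'
  have hyne : py ≠ 0 := hpy0.ne'
  have hzne : pz ≠ 0 := hpz0.ne'
  have hsne : ps ≠ 0 := hps0.ne'
  have hXne : s - a ≠ 0 := hX.ne'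
  have hYne : s - b ≠ 0 := hY.ne'
  have hZne : s - c ≠ 0 := hZ.ne'
  have hSne : s ≠ 0 := hS0.ne'
  -- key square relations
  have hrel : ps ^ 2 = px ^ 2 + py ^ 2 + pz ^ 2 := by
    rw [hps2, hpx2, hpy2, hpz2, hs]; ring
  -- rA and r in atoms
  have hrA' : rA = ps * py * pz / px := by
    rw [hrA, show s * (s - b) * (s - c) / (s - a) = (ps * py * pz / px) ^ 2 by
      rw [div_pow, mul_pow, mul_pow, hps2, hpy2, hpz2, hpx2]]
    exact Real.sqrt_sq (by positivity)
  have hr' : r = px * py * pz / ps := by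
    rw [hr, show (s - a) * (s - b) * (s - c) / s = (px * py * pz / ps) ^ 2 by
      rw [div_pow, mul_pow, mul_pow, hpx2, hpy2, hpz2, hps2]]
    exact Real.sqrt_sq (by positivity)
  -- l, mb, nb in atoms
  have hl' : l = ps * px / (py * pz) := by
    rw [hl, hrA', ← hps2]; field_simp
  have hm' : mb = pz * px / (ps * py) := by
    rw [hm, hrA', ← hpz2]; field_simp
  have hn' : nb = py * px / (ps * pz) := by
    rw [hn, hrA', ← hpy2]; field_simp
  -- the three square roots
  have hL : Real.sqrt (l ^ 2 + 1) = pb * pc / (py * pz) := by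
    rw [show l ^ 2 + 1 = (pb * pc / (py * pz)) ^ 2 by
      rw [hl']
      simp only [div_pow, mul_pow, hps2, hpx2, hpy2, hpz2, hpb2, hpc2]
      field_simp
      rw [hs]; ring]
    exact Real.sqrt_sq (by positivity)
  have hM : Real.sqrt (mb ^ 2 + 1) = pc * pa / (ps * py) := by
    rw [show mb ^ 2 + 1 = (pc * pa / (ps * py)) ^ 2 by
      rw [hm']
      simp only [div_pow, mul_pow, hps2, hpx2, hpy2, hpz2, hpc2, hpa2]
      field_simp
      rw [hs]; ring]
    exact Real.sqrt_sq (by positivity)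
  have hN : Real.sqrt (nb ^ 2 + 1) = pb * pa / (ps * pz) := by
    rw [show nb ^ 2 + 1 = (pb * pa / (ps * pz)) ^ 2 by
      rw [hn']
      simp only [div_pow, mul_pow, hps2, hpx2, hpy2, hpz2, hpb2, hpa2]
      field_simp
      rw [hs]; ring]
    exact Real.sqrt_sq (by positivity)
  -- sinh and cosh values
  have sqrt_of_sq : ∀ u v : ℝ, 0 ≤ u → 0 ≤ v → u ^ 2 = v ^ 2 → u = v := by
    intro u v hu hv h
    calc u = Real.sqrt (u ^ 2) := (Real.sqrt_sq hu).symm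
    _ = Real.sqrt (v ^ 2) := by rw [h]
    _ = v := Real.sqrt_sq hv
  have hsa : Real.sinh αA = pa / px := by
    refine sqrt_of_sq _ _ (Real.sinh_pos_iff.mpr hαA).le (by positivity) ?_
    rw [hsinhα, div_pow, hpa2, hpx2]
  have hsb : Real.sinh βA = pz / px := by
    refine sqrt_of_sq _ _ (Real.sinh_pos_iff.mpr hβA).le (by positivity) ?_
    rw [hsinhβ, div_pow, hpz2, hpx2]
  have hsc : Real.sinh γA = py / px := by
    refine sqrt_of_sq _ _ (Real.sinh_pos_iff.mpr hγA).le (by positivity) ?_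
    rw [hsinhγ, div_pow, hpy2, hpx2]
  have hca : Real.cosh αA = ps / px := by
    refine sqrt_of_sq _ _ (Real.cosh_pos _).le (by positivity) ?_
    rw [Real.cosh_sq, hsinhα, div_pow, hps2, hpx2]
    rw [div_add' _ _ _ hXne, div_eq_div_iff hXne hXne]; ring
  have hcb : Real.cosh βA = pb / px := by
    refine sqrt_of_sq _ _ (Real.cosh_pos _).le (by positivity) ?_
    rw [Real.cosh_sq, hsinhβ, div_pow, hpb2, hpx2]
    rw [div_add' _ _ _ hXne, div_eq_div_iff hXne hXne, hs]; ring
  have hcc : Real.cosh γA = pc / px := by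
    refine sqrt_of_sq _ _ (Real.cosh_pos _).le (by positivity) ?_
    rw [Real.cosh_sq, hsinhγ, div_pow, hpc2, hpx2]
    rw [div_add' _ _ _ hXne, div_eq_div_iff hXne hXne, hs]; ring
  -- express sinh (σA - αA) ^ 2 via cosh of double angle
  have hdouble : βA + γA - αA = 2 * (σA - αA) := by rw [hσA]; ring
  have hsq : Real.sinh (σA - αA) ^ 2 = (Real.cosh (βA + γA - αA) - 1) / 2 := by
    rw [hdouble, Real.cosh_two_mul, Real.cosh_sq]; ring
  have hcosh : Real.cosh (βA + γA - αA)
      = ((pb * pc + pz * py) * ps - (pz * pc + pb * py) * pa) / (px ^ 2 * px) := by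
    rw [Real.cosh_sub, Real.cosh_add, Real.sinh_add, hsa, hsb, hsc, hca, hcb, hcc]
    rw [eq_div_iff (by positivity : px ^ 2 * px ≠ 0)]
    field_simp
  rw [hL, hM, hN, hsq, hcosh, hrA', hr', hl', hm', hn']
  have hdiff :
      ps * py * pz / px * (pb * pc / (py * pz) - pc * pa / (ps * py) - pb * pa / (ps * pz)
          - ps * px / (py * pz) + pz * px / (ps * py) + py * px / (ps * pz) + 1)
        / (2 * (ps * px / (py * pz)))
      - px * py * pz / ps
        * ((((pb * pc + pz * py) * ps - (pz * pc + pb * py) * pa) / (px ^ 2 * px) - 1) / 2)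
      = px * py * pz * (px ^ 2 + py ^ 2 + pz ^ 2 - ps ^ 2) / (2 * px ^ 2 * ps) := by
    field_simp
    ring
  have hz : px ^ 2 + py ^ 2 + pz ^ 2 - ps ^ 2 = 0 := by rw [hrel]; ring
  rw [hz] at hdiff
  simp at hdiff
  linarith [hdiff]
end

section
/- With the above notation, r_A·(√(l²+1) + √(m̄²+1) + √(n̄²+1) − l + m̄ + n̄ + 1)/(2l) = r·sinh²σ_A. -/
/-!
Put `X = √(s - a)`, `Y = √(s - b)`, `Z = √(s - c)`, so that `s = X² + Y² + Z²`, `a = Y² + Z²`,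
`b = X² + Z²`, `c = X² + Y²`, and let `S, A, B, C` be the square roots of `s, a, b, c`. Then
`sinh α_A = A/X`, `sinh β_A = Z/X`, `sinh γ_A = Y/X` with coshes `S/X`, `B/X`, `C/X`, while
`r = XYZ/S`, `r_A = SYZ/X`, `l = SX/(YZ)`, `m̄ = XZ/(SY)`, `n̄ = XY/(SZ)`; the identity
`s(s - a) + (s - b)(s - c) = bc` and its permutations turn the three radicals on the left into
`BC/(YZ)`, `AC/(SY)`, `AB/(SZ)`. Writing `sinh² σ_A = (cosh(α_A + β_A + γ_A) - 1)/2` and expanding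
by the addition formulas, both sides become rational functions of `X, Y, Z, S, A, B, C` which
agree modulo `S² = X² + Y² + Z²`.
-/

open Real

namespace Real

theorem sinh_sq_half (t : ℝ) : sinh (t / 2) ^ 2 = (cosh t - 1) / 2 := by
  have h := cosh_two_mul (t / 2)
  rw [mul_div_cancel₀ t two_ne_zero, cosh_sq] at h
  linarith

theorem sinh_eq_div_and_cosh_eq_div {t X A S : ℝ} (ht : 0 ≤ t) (hX : 0 < X) (hA : 0 ≤ A)
    (hS : 0 ≤ S) (h : sinh t ^ 2 = A ^ 2 / X ^ 2) (hS2 : S ^ 2 = X ^ 2 + A ^ 2) :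
    sinh t = A / X ∧ cosh t = S / X := by
  have hsinh : sinh t = A / X :=
    (pow_left_inj₀ (sinh_nonneg_iff.2 ht) (by positivity) two_ne_zero).1 (by rw [h, div_pow])
  refine ⟨hsinh, (pow_left_inj₀ (cosh_pos t).le (by positivity) two_ne_zero).1 ?_⟩
  rw [cosh_sq, hsinh, div_pow, div_pow, hS2]
  field_simp
  ring

theorem sqrt_div_sq_add_one {p q w : ℝ} (hq : 0 < q) (hw : 0 ≤ w)
    (h : p ^ 2 + q ^ 2 = w ^ 2) : √((p / q) ^ 2 + 1) = w / q := by
  rw [sqrt_eq_iff_eq_sq (by positivity) (by positivity), div_pow, div_pow, ← h]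
  field_simp

end Real

theorem cosh_add_add_eq_div {α β γ X Y Z S A B C : ℝ} (hα : 0 ≤ α) (hβ : 0 ≤ β) (hγ : 0 ≤ γ)
    (hX : 0 < X) (hY : 0 ≤ Y) (hZ : 0 ≤ Z) (hS : 0 ≤ S) (hA : 0 ≤ A) (hB : 0 ≤ B) (hC : 0 ≤ C)
    (hsinhα : sinh α ^ 2 = A ^ 2 / X ^ 2) (hsinhβ : sinh β ^ 2 = Z ^ 2 / X ^ 2)
    (hsinhγ : sinh γ ^ 2 = Y ^ 2 / X ^ 2) (hS2 : S ^ 2 = X ^ 2 + A ^ 2)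
    (hB2 : B ^ 2 = X ^ 2 + Z ^ 2) (hC2 : C ^ 2 = X ^ 2 + Y ^ 2) :
    cosh (α + β + γ) = (S * B * C + S * Z * Y + A * B * Y + A * Z * C) / X ^ 3 := by
  obtain ⟨hsα, hcα⟩ := sinh_eq_div_and_cosh_eq_div hα hX hA hS hsinhα hS2
  obtain ⟨hsβ, hcβ⟩ := sinh_eq_div_and_cosh_eq_div hβ hX hZ hB hsinhβ hB2
  obtain ⟨hsγ, hcγ⟩ := sinh_eq_div_and_cosh_eq_div hγ hX hY hC hsinhγ hC2
  rw [cosh_add_add, hsα, hcα, hsβ, hcβ, hsγ, hcγ]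
  field_simp

theorem malfatti_radius_a6_sqrt_ravi {X Y Z S A B C r rA α β γ l mb nb : ℝ}
    (hX : 0 < X) (hY : 0 < Y) (hZ : 0 < Z) (hS : 0 < S) (hA : 0 ≤ A) (hB : 0 ≤ B) (hC : 0 ≤ C)
    (hS2 : S ^ 2 = X ^ 2 + Y ^ 2 + Z ^ 2) (hA2 : A ^ 2 = Y ^ 2 + Z ^ 2)
    (hB2 : B ^ 2 = X ^ 2 + Z ^ 2) (hC2 : C ^ 2 = X ^ 2 + Y ^ 2)
    (hr : r = √(X ^ 2 * Y ^ 2 * Z ^ 2 / S ^ 2)) (hrA : rA = √(S ^ 2 * Y ^ 2 * Z ^ 2 / X ^ 2))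
    (hα : 0 ≤ α) (hβ : 0 ≤ β) (hγ : 0 ≤ γ)
    (hsinhα : sinh α ^ 2 = A ^ 2 / X ^ 2) (hsinhβ : sinh β ^ 2 = Z ^ 2 / X ^ 2)
    (hsinhγ : sinh γ ^ 2 = Y ^ 2 / X ^ 2)
    (hl : l = S ^ 2 / rA) (hm : mb = Z ^ 2 / rA) (hn : nb = Y ^ 2 / rA) :
    rA * (√(l ^ 2 + 1) + √(mb ^ 2 + 1) + √(nb ^ 2 + 1) - l + mb + nb + 1) / (2 * l)
      = r * sinh ((α + β + γ) / 2) ^ 2 := by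
  have hr' : r = X * Y * Z / S := by
    rw [hr, ← mul_pow, ← mul_pow, ← div_pow, sqrt_sq (by positivity)]
  have hrA' : rA = S * Y * Z / X := by
    rw [hrA, ← mul_pow, ← mul_pow, ← div_pow, sqrt_sq (by positivity)]
  have hl' : l = S * X / (Y * Z) := by rw [hl, hrA']; field_simp
  have hm' : mb = X * Z / (S * Y) := by rw [hm, hrA']; field_simp
  have hn' : nb = X * Y / (S * Z) := by rw [hn, hrA']; field_simp
  have hsl : √(l ^ 2 + 1) = B * C / (Y * Z) := by
    rw [hl']
    exact sqrt_div_sq_add_one (by positivity) (by positivity)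
      (by simp only [mul_pow, hS2, hB2, hC2]; ring)
  have hsm : √(mb ^ 2 + 1) = A * C / (S * Y) := by
    rw [hm']
    exact sqrt_div_sq_add_one (by positivity) (by positivity)
      (by simp only [mul_pow, hS2, hA2, hC2]; ring)
  have hsn : √(nb ^ 2 + 1) = A * B / (S * Z) := by
    rw [hn']
    exact sqrt_div_sq_add_one (by positivity) (by positivity)
      (by simp only [mul_pow, hS2, hA2, hB2]; ring)
  rw [sinh_sq_half, cosh_add_add_eq_div hα hβ hγ hX hY.le hZ.le hS.le hA hB hC hsinhα hsinhβ
    hsinhγ (by rw [hS2, hA2]; ring) hB2 hC2, hsl, hsm, hsn, hl', hm', hn', hrA', hr']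
  field_simp
  linear_combination (-X) * hS2

theorem malfatti_radius_a6_general
    (a b c : ℝ)
    (habc : a < b + c) (hbca : b < c + a) (hcab : c < a + b)
    (s r rA αA βA γA σA l mb nb : ℝ)
    (hs : s = (a + b + c) / 2)
    (hr : r = Real.sqrt ((s - a) * (s - b) * (s - c) / s))
    (hrA : rA = Real.sqrt (s * (s - b) * (s - c) / (s - a)))
    (hαA : 0 < αA) (hβA : 0 < βA) (hγA : 0 < γA)
    (hsinhα : Real.sinh αA ^ 2 = a / (s - a))
    (hsinhβ : Real.sinh βA ^ 2 = (s - c) / (s - a))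
    (hsinhγ : Real.sinh γA ^ 2 = (s - b) / (s - a))
    (hσA : σA = (αA + βA + γA) / 2)
    (hl : l = s / rA) (hm : mb = (s - c) / rA) (hn : nb = (s - b) / rA) :
    rA * (Real.sqrt (l ^ 2 + 1) + Real.sqrt (mb ^ 2 + 1) + Real.sqrt (nb ^ 2 + 1) - l + mb + nb + 1) / (2 * l) = r * Real.sinh σA ^ 2 := by
  have hx : 0 < s - a := by linarith
  have hy : 0 < s - b := by linarith
  have hz : 0 < s - c := by linarith
  have hs0 : 0 < s := by linarith
  rw [hσA]
  refine malfatti_radius_a6_sqrt_ravi (sqrt_pos.2 hx) (sqrt_pos.2 hy) (sqrt_pos.2 hz)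
    (sqrt_pos.2 hs0) (sqrt_nonneg a) (sqrt_nonneg b) (sqrt_nonneg c) ?_ ?_ ?_ ?_ ?_ ?_
    hαA.le hβA.le hγA.le ?_ ?_ ?_ ?_ ?_ ?_ <;>
  simp only [sq_sqrt hx.le, sq_sqrt hy.le, sq_sqrt hz.le, sq_sqrt hs0.le,
    sq_sqrt (by linarith : 0 ≤ a), sq_sqrt (by linarith : 0 ≤ b), sq_sqrt (by linarith : 0 ≤ c)] <;>
  first | assumption | linarith

theorem malfatti_radius_a6
    (a b c : ℝ) (ha : 0 < a) (hb : 0 < b) (hc : 0 < c)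
    (habc : a < b + c) (hbca : b < c + a) (hcab : c < a + b)
    (s r rA rC αA βA γA σA l mb nb : ℝ)
    (hs : s = (a + b + c) / 2)
    (hr : r = Real.sqrt ((s - a) * (s - b) * (s - c) / s))
    (hrA : rA = Real.sqrt (s * (s - b) * (s - c) / (s - a)))
    (hrC : rC = Real.sqrt (s * (s - a) * (s - b) / (s - c)))
    (hαA : 0 < αA) (hβA : 0 < βA) (hγA : 0 < γA)
    (hsinhα : Real.sinh αA ^ 2 = a / (s - a))
    (hsinhβ : Real.sinh βA ^ 2 = (s - c) / (s - a))
    (hsinhγ : Real.sinh γA ^ 2 = (s - b) / (s - a))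
    (hσA : σA = (αA + βA + γA) / 2)
    (hl : l = s / rA) (hm : mb = (s - c) / rA) (hn : nb = (s - b) / rA) :
    rA * (Real.sqrt (l ^ 2 + 1) + Real.sqrt (mb ^ 2 + 1) + Real.sqrt (nb ^ 2 + 1) - l + mb + nb + 1) / (2 * l) = r * Real.sinh σA ^ 2 :=
  malfatti_radius_a6_general a b c habc hbca hcab s r rA αA βA γA σA l mb nb hs hr hrA hαA hβA hγA
    hsinhα hsinhβ hsinhγ hσA hl hm hn
end

section
/- With the above notation, r_A·(√(l²+1) − √(m̄²+1) + √(n̄²+1) − l + m̄ + n̄ − 1)/(2m̄) = r_C·sinh²(σ_A − β_A). -/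
/-!
Substitute s - a = X², s - b = Y², s - c = Z², so that s = X² + Y² + Z², a = Y² + Z²,
b = X² + Z², c = X² + Y². Every square root in the statement then becomes a monomial in X, Y, Z
and the surds S = √s, P = √c, Q = √a, R = √b: for instance r_A = SYZ/X, l = SX/(YZ),
√(l² + 1) = PR/(YZ), sinh α_A = Q/X, cosh α_A = S/X. As σ_A - β_A = (α_A + γ_A - β_A)/2, the
right side is r_C (cosh (α_A + γ_A - β_A) - 1)/2, and both sides equal
SY(SPR + QRY - PQZ - SYZ - X³)/(2X²Z).
-/

open Real

theorem Real.sinh_sq_half_s18 (t : ℝ) : sinh (t / 2) ^ 2 = (cosh t - 1) / 2 := by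
  rw [show cosh t = cosh (2 * (t / 2)) by ring_nf, cosh_two_mul, cosh_sq]
  ring

theorem Real.sinh_cosh_eq_of_sinh_sq_eq {θ p q : ℝ} (hθ : 0 < θ) (hq : 0 < q)
    (h : sinh θ ^ 2 = p / q ^ 2) : sinh θ = √p / q ∧ cosh θ = √(q ^ 2 + p) / q := by
  constructor
  · rw [← sqrt_sq (sinh_pos_iff.2 hθ).le, h, sqrt_div' _ (sq_nonneg q), sqrt_sq hq.le]
  · rw [← sqrt_sq (cosh_pos θ).le, cosh_sq', h, one_add_div (by positivity),
      sqrt_div' _ (sq_nonneg q), sqrt_sq hq.le]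

theorem Real.sqrt_div_sq_add_one_s18 (u : ℝ) {v : ℝ} (hv : 0 < v) :
    √((u / v) ^ 2 + 1) = √(u ^ 2 + v ^ 2) / v := by
  rw [div_pow, div_add_one (by positivity), sqrt_div' _ (sq_nonneg v), sqrt_sq hv.le]

theorem Real.sqrt_mul_sq_mul_sq_div_sq {p x y z : ℝ} (hp : 0 ≤ p) (hx : 0 ≤ x) (hy : 0 ≤ y)
    (hz : 0 ≤ z) : √(p * x ^ 2 * y ^ 2 / z ^ 2) = √p * x * y / z := by
  rw [sqrt_div' _ (sq_nonneg z), sqrt_mul (by positivity), sqrt_mul hp, sqrt_sq hx, sqrt_sq hy,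
    sqrt_sq hz]

theorem exists_sq_add_sq_of_triangle {a b c : ℝ} (habc : a < b + c) (hbca : b < c + a)
    (hcab : c < a + b) :
    ∃ X Y Z : ℝ, 0 < X ∧ 0 < Y ∧ 0 < Z ∧
      a = Y ^ 2 + Z ^ 2 ∧ b = X ^ 2 + Z ^ 2 ∧ c = X ^ 2 + Y ^ 2 := by
  have hx : 0 < (b + c - a) / 2 := by linarith
  have hy : 0 < (c + a - b) / 2 := by linarith
  have hz : 0 < (a + b - c) / 2 := by linarith
  refine ⟨_, _, _, sqrt_pos.2 hx, sqrt_pos.2 hy, sqrt_pos.2 hz, ?_, ?_, ?_⟩ <;>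
    simp only [sq_sqrt hx.le, sq_sqrt hy.le, sq_sqrt hz.le] <;> ring

theorem malfatti_expr_eq_surd {X Y Z S P Q R rA : ℝ} (hX : 0 < X) (hY : 0 < Y) (hZ : 0 < Z)
    (hS : S = √(X ^ 2 + Y ^ 2 + Z ^ 2)) (hP : P = √(X ^ 2 + Y ^ 2)) (hQ : Q = √(Y ^ 2 + Z ^ 2))
    (hR : R = √(X ^ 2 + Z ^ 2)) (hrA : rA = √((X ^ 2 + Y ^ 2 + Z ^ 2) * Y ^ 2 * Z ^ 2 / X ^ 2)) :
    rA * (√(((X ^ 2 + Y ^ 2 + Z ^ 2) / rA) ^ 2 + 1) - √((Z ^ 2 / rA) ^ 2 + 1)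
      + √((Y ^ 2 / rA) ^ 2 + 1) - (X ^ 2 + Y ^ 2 + Z ^ 2) / rA + Z ^ 2 / rA + Y ^ 2 / rA - 1)
        / (2 * (Z ^ 2 / rA)) =
    S * Y * (S * P * R + Q * Y * R - Q * P * Z - S * Y * Z - X ^ 3) / (2 * X ^ 2 * Z) := by
  have hS0 : 0 < S := hS ▸ sqrt_pos.2 (by positivity)
  have hS2 : S ^ 2 = X ^ 2 + Y ^ 2 + Z ^ 2 := hS ▸ sq_sqrt (by positivity)
  rw [← hS2, sqrt_mul_sq_mul_sq_div_sq (sq_nonneg S) hY.le hZ.le hX.le, sqrt_sq hS0.le] at hrA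
  subst hrA
  have hl : S ^ 2 / (S * Y * Z / X) = S * X / (Y * Z) := by field_simp
  have hm : Z ^ 2 / (S * Y * Z / X) = X * Z / (S * Y) := by field_simp
  have hn : Y ^ 2 / (S * Y * Z / X) = X * Y / (S * Z) := by field_simp
  rw [← hS2, hl, hm, hn, sqrt_div_sq_add_one_s18 _ (by positivity),
    sqrt_div_sq_add_one_s18 _ (by positivity), sqrt_div_sq_add_one_s18 _ (by positivity),
    show (S * X) ^ 2 + (Y * Z) ^ 2 = (X ^ 2 + Y ^ 2) * (X ^ 2 + Z ^ 2) by rw [mul_pow, hS2]; ring,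
    show (X * Z) ^ 2 + (S * Y) ^ 2 = (X ^ 2 + Y ^ 2) * (Y ^ 2 + Z ^ 2) by rw [mul_pow S, hS2]; ring,
    show (X * Y) ^ 2 + (S * Z) ^ 2 = (Y ^ 2 + Z ^ 2) * (X ^ 2 + Z ^ 2) by rw [mul_pow S, hS2]; ring,
    sqrt_mul (by positivity), sqrt_mul (by positivity), sqrt_mul (by positivity), ← hP, ← hQ, ← hR]
  field_simp
  -- `-l + m̄ + n̄ = X (Y² + Z² - S²)/(SYZ) = -X³/(SYZ)`
  linear_combination (-X) * hS2

theorem exradius_mul_sinh_sq_eq_surd {X Y Z S P Q R α β γ : ℝ} (hX : 0 < X) (hY : 0 < Y)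
    (hZ : 0 < Z) (hS : S = √(X ^ 2 + Y ^ 2 + Z ^ 2)) (hP : P = √(X ^ 2 + Y ^ 2))
    (hQ : Q = √(Y ^ 2 + Z ^ 2)) (hR : R = √(X ^ 2 + Z ^ 2)) (hα : 0 < α) (hβ : 0 < β)
    (hγ : 0 < γ) (hsinhα : sinh α ^ 2 = (Y ^ 2 + Z ^ 2) / X ^ 2)
    (hsinhβ : sinh β ^ 2 = Z ^ 2 / X ^ 2) (hsinhγ : sinh γ ^ 2 = Y ^ 2 / X ^ 2) :
    √((X ^ 2 + Y ^ 2 + Z ^ 2) * X ^ 2 * Y ^ 2 / Z ^ 2) * sinh ((α + β + γ) / 2 - β) ^ 2 =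
    S * Y * (S * P * R + Q * Y * R - Q * P * Z - S * Y * Z - X ^ 3) / (2 * X ^ 2 * Z) := by
  subst hS hP hQ hR
  obtain ⟨hsα, hcα⟩ := sinh_cosh_eq_of_sinh_sq_eq hα hX hsinhα
  obtain ⟨hsβ, hcβ⟩ := sinh_cosh_eq_of_sinh_sq_eq hβ hX hsinhβ
  obtain ⟨hsγ, hcγ⟩ := sinh_cosh_eq_of_sinh_sq_eq hγ hX hsinhγ
  rw [← add_assoc] at hcα
  rw [sqrt_sq hZ.le] at hsβ
  rw [sqrt_sq hY.le] at hsγ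
  rw [sqrt_mul_sq_mul_sq_div_sq (by positivity) hX.le hY.le hZ.le,
    show (α + β + γ) / 2 - β = (α + γ - β) / 2 by ring, sinh_sq_half_s18, cosh_sub, cosh_add, sinh_add,
    hsα, hcα, hsβ, hcβ, hsγ, hcγ]
  field_simp
  ring

theorem malfatti_radius_a1_C_general
    (a b c : ℝ)
    (habc : a < b + c) (hbca : b < c + a) (hcab : c < a + b)
    (s rA rC αA βA γA σA l mb nb : ℝ)
    (hs : s = (a + b + c) / 2)
    (hrA : rA = Real.sqrt (s * (s - b) * (s - c) / (s - a)))
    (hrC : rC = Real.sqrt (s * (s - a) * (s - b) / (s - c)))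
    (hαA : 0 < αA) (hβA : 0 < βA) (hγA : 0 < γA)
    (hsinhα : Real.sinh αA ^ 2 = a / (s - a))
    (hsinhβ : Real.sinh βA ^ 2 = (s - c) / (s - a))
    (hsinhγ : Real.sinh γA ^ 2 = (s - b) / (s - a))
    (hσA : σA = (αA + βA + γA) / 2)
    (hl : l = s / rA) (hm : mb = (s - c) / rA) (hn : nb = (s - b) / rA) :
    rA * (Real.sqrt (l ^ 2 + 1) - Real.sqrt (mb ^ 2 + 1) + Real.sqrt (nb ^ 2 + 1) - l + mb + nb - 1) / (2 * mb) = rC * Real.sinh (σA - βA) ^ 2 := by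
  obtain ⟨X, Y, Z, hX, hY, hZ, rfl, rfl, rfl⟩ := exists_sq_add_sq_of_triangle habc hbca hcab
  obtain rfl : s = X ^ 2 + Y ^ 2 + Z ^ 2 := by rw [hs]; ring
  have hx : X ^ 2 + Y ^ 2 + Z ^ 2 - (Y ^ 2 + Z ^ 2) = X ^ 2 := by ring
  have hy : X ^ 2 + Y ^ 2 + Z ^ 2 - (X ^ 2 + Z ^ 2) = Y ^ 2 := by ring
  have hz : X ^ 2 + Y ^ 2 + Z ^ 2 - (X ^ 2 + Y ^ 2) = Z ^ 2 := by ring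
  simp only [hx, hy, hz] at hrA hrC hsinhα hsinhβ hsinhγ hm hn
  subst hl hm hn hrC hσA
  rw [malfatti_expr_eq_surd hX hY hZ rfl rfl rfl rfl hrA,
    exradius_mul_sinh_sq_eq_surd hX hY hZ rfl rfl rfl rfl hαA hβA hγA hsinhα hsinhβ hsinhγ]

theorem malfatti_radius_a1_C
    (a b c : ℝ) (ha : 0 < a) (hb : 0 < b) (hc : 0 < c)
    (habc : a < b + c) (hbca : b < c + a) (hcab : c < a + b)
    (s r rA rC αA βA γA σA l mb nb : ℝ)
    (hs : s = (a + b + c) / 2)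
    (hr : r = Real.sqrt ((s - a) * (s - b) * (s - c) / s))
    (hrA : rA = Real.sqrt (s * (s - b) * (s - c) / (s - a)))
    (hrC : rC = Real.sqrt (s * (s - a) * (s - b) / (s - c)))
    (hαA : 0 < αA) (hβA : 0 < βA) (hγA : 0 < γA)
    (hsinhα : Real.sinh αA ^ 2 = a / (s - a))
    (hsinhβ : Real.sinh βA ^ 2 = (s - c) / (s - a))
    (hsinhγ : Real.sinh γA ^ 2 = (s - b) / (s - a))
    (hσA : σA = (αA + βA + γA) / 2)
    (hl : l = s / rA) (hm : mb = (s - c) / rA) (hn : nb = (s - b) / rA) :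
    rA * (Real.sqrt (l ^ 2 + 1) - Real.sqrt (mb ^ 2 + 1) + Real.sqrt (nb ^ 2 + 1) - l + mb + nb - 1) / (2 * mb) = rC * Real.sinh (σA - βA) ^ 2 :=
  malfatti_radius_a1_C_general a b c habc hbca hcab s rA rC αA βA γA σA l mb nb hs hrA hrC hαA hβA
    hγA hsinhα hsinhβ hsinhγ hσA hl hm hn
end

section
/- Let A, B, C be three affinely independent points of the Euclidean plane (EuclideanSpace ℝ (Fin 2)), and let a = dist(B,C), b = dist(C,A), c = dist(A,B), with s, r_A, r_B, r_C, α, β, γ, σ defined from a, b, c as in the context. Set r₁ = r_A·sin²(σ−α), r₂ = r_B·sin²(σ−β), r₃ = r_C·sin²(σ−γ). Then there exist points O₁, O₂, O₃ in the plane such that: the distance from O₁ to the line through A and B equals r₁ and the distance from O₁ to the line through C and A equals r₁; the distance from O₂ to the line through A and B equals r₂ and the distance from O₂ to the line through B and C equals r₂; the distance from O₃ to the line through B and C equals r₃ and the distance from O₃ to the line through C and A equals r₃; and dist(O₁,O₂) = r₁ + r₂, dist(O₁,O₃) = r₁ + r₃, dist(O₂,O₃) = r₂ + r₃ (i.e.,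 the three circles with these centers and radii are the Malfatti circles: each is tangent to two sides of the triangle and the circles are pairwise externally tangent). -/
/-!
Let `I` be the incenter and `r` the inradius. The circle of radius `ρ` centred at
`A + (ρ / r) • (I - A)` is the image of the incircle under the homothety at `A` with ratio `ρ / r`,
so it touches `AB` and `AC`, and it touches `AB` at distance `ρ (s - a) / r` from `A`. Two such
circles at `A` and `B` lie on the same side of `AB`, so they are externally tangent exactly when
the gap `c - (ρ₁ (s - a) + ρ₂ (s - b)) / r` between their points of contact has square `4 ρ₁ ρ₂`.
For the Malfatti radii, `r₁ (s - a) / r = s sin²(σ - α)` and `r₁ r₂ = s (s - c) sin²(σ - α) sin²(σ - β)`.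
Since `(σ - α) + (σ - β) = γ` and `s sin² γ = c`, expanding `sin²(x + y)` turns the gap into
`2 s sin(σ - α) sin(σ - β) cos γ`, whose square is `4 r₁ r₂` because `s cos² γ = s - c`.
-/

open Real EuclideanGeometry
open scoped RealInnerProductSpace

theorem dist_lt_dist_add_dist_of_not_collinear {V P : Type*} [NormedAddCommGroup V]
    [NormedSpace ℝ V] [StrictConvexSpace ℝ V] [MetricSpace P] [NormedAddTorsor V P] {A B C : P}
    (h : ¬ Collinear ℝ {A, B, C}) : dist B C < dist C A + dist A B := by
  have hBAC : ¬ Wbtw ℝ B A C := fun hw => h (by rw [Set.insert_comm]; exact hw.collinear)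
  linarith [dist_lt_dist_add_dist_iff.2 hBAC, dist_comm A B, dist_comm C A]

section InnerProductSpace

variable {E : Type*} [NormedAddCommGroup E] [InnerProductSpace ℝ E]

theorem infDist_affineSpan_pair_eq_norm (X Y w : E) (μ : ℝ) (hw : ⟪w, Y - X⟫ = 0) :
    Metric.infDist (X + μ • (Y - X) + w) (line[ℝ, X, Y] : Set E) = ‖w‖ := by
  have hQ : X + μ • (Y - X) ∈ line[ℝ, X, Y] := by
    simpa [AffineMap.lineMap_apply, add_comm] using AffineMap.lineMap_mem_affineSpan_pair μ X Y
  have : Nonempty line[ℝ, X, Y] := ⟨⟨_, hQ⟩⟩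
  have hproj : (orthogonalProjection line[ℝ, X, Y] (X + μ • (Y - X) + w) : E) =
      X + μ • (Y - X) := by
    refine coe_orthogonalProjection_eq_iff_mem.2 ⟨hQ, ?_⟩
    rw [direction_affineSpan, vectorSpan_pair, Submodule.mem_orthogonal_singleton_iff_inner_right,
      vsub_eq_sub, vsub_eq_sub, add_sub_cancel_left, ← neg_sub, inner_neg_left, real_inner_comm,
      hw, neg_zero]
  rw [← dist_orthogonalProjection_eq_infDist, hproj, dist_eq_norm, add_sub_cancel_left]

theorem dist_add_smul_add_smul_sq {X Y n : E} (hn : ⟪n, Y - X⟫ = 0) (u v p q : ℝ) :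
    dist (X + u • (Y - X) + p • n) (Y + v • (X - Y) + q • n) ^ 2 =
      ((1 - u - v) * ‖Y - X‖) ^ 2 + ((p - q) * ‖n‖) ^ 2 := by
  have hperp : ⟪(u + v - 1) • (Y - X), (p - q) • n⟫ = 0 := by
    rw [real_inner_smul_left, real_inner_smul_right, real_inner_comm, hn, mul_zero, mul_zero]
  have hdiff : X + u • (Y - X) + p • n - (Y + v • (X - Y) + q • n) =
      (u + v - 1) • (Y - X) + (p - q) • n := by
    module
  rw [dist_eq_norm, hdiff, sq, norm_add_sq_eq_norm_sq_add_norm_sq_real hperp, ← sq, ← sq,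
    norm_smul, norm_smul, Real.norm_eq_abs, Real.norm_eq_abs, mul_pow, mul_pow, mul_pow,
    mul_pow, sq_abs, sq_abs]
  ring

noncomputable def triangleIncenter (A B C : E) : E :=
  (dist B C + dist C A + dist A B)⁻¹ • (dist B C • A + dist C A • B + dist A B • C)

theorem triangleIncenter_rotate (A B C : E) :
    triangleIncenter B C A = triangleIncenter A B C := by
  rw [triangleIncenter, triangleIncenter, add_rotate (dist C A), add_rotate (dist A B),
    add_rotate (dist C A • B), add_rotate (dist A B • C)]

variable {A B C : E} {a b c s r : ℝ}

theorem triangleIncenter_sub_left (ha : dist B C = a) (hb : dist C A = b) (hc : dist A B = c)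
    (hs : a + b + c = 2 * s) (hs0 : s ≠ 0) :
    triangleIncenter A B C - A = (2 * s)⁻¹ • (b • (B - A) + c • (C - A)) := by
  rw [triangleIncenter, ha, hb, hc, hs]
  linear_combination (norm := match_scalars <;> field_simp <;> ring) (2 * s)⁻¹ • hs • A

theorem exists_triangleIncenter_sub_eq (ha : dist B C = a) (hb : dist C A = b)
    (hc : dist A B = c) (hs : a + b + c = 2 * s) (hc0 : 0 < c)
    (hr : r ^ 2 * s = (s - a) * (s - b) * (s - c)) (hr0 : 0 ≤ r) :
    ∃ n : E, ⟪n, B - A⟫ = 0 ∧ ‖n‖ = r ∧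
      triangleIncenter A B C - A = ((s - a) / c) • (B - A) + n ∧
      triangleIncenter A B C - B = ((s - b) / c) • (A - B) + n := by
  have hs0 : 0 < s := by
    linarith [ha ▸ dist_nonneg (x := B) (y := C), hb ▸ dist_nonneg (x := C) (y := A)]
  have he : ‖B - A‖ ^ 2 = c ^ 2 := by rw [← dist_eq_norm, dist_comm, hc]
  have hf : ‖C - A‖ ^ 2 = b ^ 2 := by rw [← dist_eq_norm, hb]
  have hef : ⟪B - A, C - A⟫ = (b ^ 2 + c ^ 2 - a ^ 2) / 2 := by
    have h := norm_sub_sq_real (C - A) (B - A)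
    rw [sub_sub_sub_cancel_right, ← dist_eq_norm, dist_comm, ha, he, hf, real_inner_comm] at h
    linarith
  have hIA := triangleIncenter_sub_left ha hb hc hs hs0.ne'
  refine ⟨(b / (2 * s) - (s - a) / c) • (B - A) + (c / (2 * s)) • (C - A), ?_, ?_, ?_, ?_⟩
  · rw [inner_add_left, real_inner_smul_left, real_inner_smul_left, real_inner_self_eq_norm_sq,
      he, real_inner_comm, hef]
    obtain rfl : a = 2 * s - b - c := by linarith
    field_simp
    ring
  · rw [← sq_eq_sq₀ (norm_nonneg _) hr0, norm_add_sq_real, norm_smul, norm_smul, mul_pow,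
      mul_pow, real_inner_smul_left, real_inner_smul_right, he, hf, hef, Real.norm_eq_abs,
      Real.norm_eq_abs, sq_abs, sq_abs, ← mul_left_inj' hs0.ne', hr]
    obtain rfl : a = 2 * s - b - c := by linarith
    field_simp
    ring
  · rw [hIA]
    module
  · obtain rfl : a = 2 * s - b - c := by linarith
    rw [← sub_add_sub_cancel _ A, hIA]
    match_scalars <;> field_simp <;> ring

theorem homothetic_incircles_tangent {ρ₁ ρ₂ : ℝ} (ha : dist B C = a) (hb : dist C A = b)
    (hc : dist A B = c) (hs : a + b + c = 2 * s) (hc0 : 0 < c)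
    (hr : r ^ 2 * s = (s - a) * (s - b) * (s - c)) (hr0 : 0 < r) (hρ₁ : 0 ≤ ρ₁) (hρ₂ : 0 ≤ ρ₂)
    (hgap : (c - (ρ₁ * (s - a) + ρ₂ * (s - b)) / r) ^ 2 = 4 * ρ₁ * ρ₂) :
    Metric.infDist (A + (ρ₁ / r) • (triangleIncenter A B C - A)) (line[ℝ, A, B] : Set E) = ρ₁ ∧
    Metric.infDist (B + (ρ₂ / r) • (triangleIncenter A B C - B)) (line[ℝ, A, B] : Set E) = ρ₂ ∧
    dist (A + (ρ₁ / r) • (triangleIncenter A B C - A))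
      (B + (ρ₂ / r) • (triangleIncenter A B C - B)) = ρ₁ + ρ₂ := by
  obtain ⟨n, hn, hnr, hIA, hIB⟩ := exists_triangleIncenter_sub_eq ha hb hc hs hc0 hr hr0.le
  have hnorm {ρ : ℝ} (hρ : 0 ≤ ρ) : ‖(ρ / r) • n‖ = ρ := by
    rw [norm_smul, hnr, Real.norm_of_nonneg (by positivity), div_mul_cancel₀ _ hr0.ne']
  have hO₁ : A + (ρ₁ / r) • (triangleIncenter A B C - A) =
      A + (ρ₁ / r * ((s - a) / c)) • (B - A) + (ρ₁ / r) • n := by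
    rw [hIA]; module
  have hO₂ : B + (ρ₂ / r) • (triangleIncenter A B C - B) =
      B + (ρ₂ / r * ((s - b) / c)) • (A - B) + (ρ₂ / r) • n := by
    rw [hIB]; module
  have hn' : ⟪n, A - B⟫ = 0 := by rw [← neg_sub, inner_neg_right, hn, neg_zero]
  refine ⟨?_, ?_, ?_⟩
  · rw [hO₁, infDist_affineSpan_pair_eq_norm _ _ _ _ (by rw [real_inner_smul_left, hn, mul_zero]),
      hnorm hρ₁]
  · rw [hO₂, Set.pair_comm, infDist_affineSpan_pair_eq_norm _ _ _ _ (by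
      rw [real_inner_smul_left, hn', mul_zero]), hnorm hρ₂]
  · rw [← sq_eq_sq₀ dist_nonneg (by positivity), hO₁, hO₂, dist_add_smul_add_smul_sq hn, hnr,
      ← dist_eq_norm, dist_comm, hc]
    have hr0' := hr0.ne'
    field_simp at hgap ⊢
    linear_combination hgap

end InnerProductSpace

theorem sin_add_sq (x y : ℝ) :
    sin (x + y) ^ 2 = sin x ^ 2 + sin y ^ 2 + 2 * sin x * sin y * cos (x + y) := by
  rw [sin_add, cos_add]
  linear_combination sin x ^ 2 * sin_sq_add_cos_sq y + sin y ^ 2 * sin_sq_add_cos_sq x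

section Exradius

variable {s a b c r rA rB : ℝ}

theorem exradius_mul_sub (hs : 0 < s) (hsa : 0 < s - a) (hsb : 0 < s - b) (hsc : 0 < s - c)
    (hr : r ^ 2 * s = (s - a) * (s - b) * (s - c)) (hr0 : 0 ≤ r)
    (hrA : rA = √(s * (s - b) * (s - c) / (s - a))) : rA * (s - a) = r * s := by
  rw [← sq_eq_sq₀ (by rw [hrA]; positivity) (by positivity), mul_pow, hrA,
    sq_sqrt (by positivity)]
  field_simp
  linear_combination -hr

theorem exradius_mul_exradius (hs : 0 < s) (hsa : 0 < s - a) (hsb : 0 < s - b)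
    (hsc : 0 < s - c) (hrA : rA = √(s * (s - b) * (s - c) / (s - a)))
    (hrB : rB = √(s * (s - c) * (s - a) / (s - b))) : rA * rB = s * (s - c) := by
  rw [hrA, hrB, ← sqrt_mul (by positivity),
    show s * (s - b) * (s - c) / (s - a) * (s * (s - c) * (s - a) / (s - b)) = (s * (s - c)) ^ 2
      by field_simp, sqrt_sq (by positivity)]

theorem malfatti_radii_gap_sq {x y : ℝ} (hs : 0 < s) (hsa : 0 < s - a) (hsb : 0 < s - b)
    (hsc : 0 < s - c) (hr : r ^ 2 * s = (s - a) * (s - b) * (s - c)) (hr0 : 0 < r)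
    (hrA : rA = √(s * (s - b) * (s - c) / (s - a)))
    (hrB : rB = √(s * (s - c) * (s - a) / (s - b))) (hxy : sin (x + y) ^ 2 = c / s) :
    (c - (rA * sin x ^ 2 * (s - a) + rB * sin y ^ 2 * (s - b)) / r) ^ 2 =
      4 * (rA * sin x ^ 2) * (rB * sin y ^ 2) := by
  have hA := exradius_mul_sub hs hsa hsb hsc hr hr0.le hrA
  have hB := exradius_mul_sub hs hsb hsc hsa (by linear_combination hr) hr0.le hrB
  have hAB := exradius_mul_exradius hs hsa hsb hsc hrA hrB
  have hc : c = s * sin (x + y) ^ 2 := by rw [hxy]; field_simp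
  have hcos : s * cos (x + y) ^ 2 = s - c := by
    linear_combination s * sin_sq_add_cos_sq (x + y) + hc
  have hgap : c - (rA * sin x ^ 2 * (s - a) + rB * sin y ^ 2 * (s - b)) / r =
      2 * s * sin x * sin y * cos (x + y) := by
    rw [show rA * sin x ^ 2 * (s - a) + rB * sin y ^ 2 * (s - b) =
        r * (s * (sin x ^ 2 + sin y ^ 2)) by linear_combination sin x ^ 2 * hA + sin y ^ 2 * hB,
      mul_div_cancel_left₀ _ hr0.ne', hc, sin_add_sq]
    ring
  rw [hgap]
  linear_combination (4 * s * sin x ^ 2 * sin y ^ 2) * hcos - (4 * sin x ^ 2 * sin y ^ 2) * hAB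

end Exradius

theorem malfatti_circles_exist_general
    (A B C : EuclideanSpace ℝ (Fin 2))
    (hABC : AffineIndependent ℝ ![A, B, C])
    (a b c : ℝ) (ha : a = dist B C) (hb : b = dist C A) (hc : c = dist A B)
    (s rA rB rC α β γ σ r₁ r₂ r₃ : ℝ)
    (hs : s = (a + b + c) / 2)
    (hrA : rA = Real.sqrt (s * (s - b) * (s - c) / (s - a)))
    (hrB : rB = Real.sqrt (s * (s - c) * (s - a) / (s - b)))
    (hrC : rC = Real.sqrt (s * (s - a) * (s - b) / (s - c)))
    (hsinα : Real.sin α ^ 2 = a / s)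
    (hsinβ : Real.sin β ^ 2 = b / s)
    (hsinγ : Real.sin γ ^ 2 = c / s)
    (hσ : σ = (α + β + γ) / 2)
    (hr₁ : r₁ = rA * Real.sin (σ - α) ^ 2)
    (hr₂ : r₂ = rB * Real.sin (σ - β) ^ 2)
    (hr₃ : r₃ = rC * Real.sin (σ - γ) ^ 2) :
    ∃ O₁ O₂ O₃ : EuclideanSpace ℝ (Fin 2),
      Metric.infDist O₁ (affineSpan ℝ {A, B} : Set (EuclideanSpace ℝ (Fin 2))) = r₁ ∧
      Metric.infDist O₁ (affineSpan ℝ {C, A} : Set (EuclideanSpace ℝ (Fin 2))) = r₁ ∧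
      Metric.infDist O₂ (affineSpan ℝ {A, B} : Set (EuclideanSpace ℝ (Fin 2))) = r₂ ∧
      Metric.infDist O₂ (affineSpan ℝ {B, C} : Set (EuclideanSpace ℝ (Fin 2))) = r₂ ∧
      Metric.infDist O₃ (affineSpan ℝ {B, C} : Set (EuclideanSpace ℝ (Fin 2))) = r₃ ∧
      Metric.infDist O₃ (affineSpan ℝ {C, A} : Set (EuclideanSpace ℝ (Fin 2))) = r₃ ∧
      dist O₁ O₂ = r₁ + r₂ ∧ dist O₁ O₃ = r₁ + r₃ ∧ dist O₂ O₃ = r₂ + r₃ := by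
  subst hr₁ hr₂ hr₃
  have hABC' : ¬ Collinear ℝ {A, B, C} := affineIndependent_iff_not_collinear_set.1 hABC
  have hBCA : ¬ Collinear ℝ {B, C, A} := by rwa [Set.insert_comm, Set.pair_comm] at hABC'
  have hCAB : ¬ Collinear ℝ {C, A, B} := by rwa [Set.insert_comm, Set.pair_comm] at hBCA
  have hsa : 0 < s - a := by linarith [dist_lt_dist_add_dist_of_not_collinear hABC']
  have hsb : 0 < s - b := by linarith [dist_lt_dist_add_dist_of_not_collinear hBCA]
  have hsc : 0 < s - c := by linarith [dist_lt_dist_add_dist_of_not_collinear hCAB]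
  have hs0 : 0 < s := by linarith
  obtain ⟨r, hr, hr0⟩ : ∃ r : ℝ, r ^ 2 * s = (s - a) * (s - b) * (s - c) ∧ 0 < r :=
    ⟨√((s - a) * (s - b) * (s - c) / s), by rw [sq_sqrt (by positivity)]; field_simp,
      sqrt_pos.2 (by positivity)⟩
  have hr' : r ^ 2 * s = (s - b) * (s - c) * (s - a) := by linear_combination hr
  have hr'' : r ^ 2 * s = (s - c) * (s - a) * (s - b) := by linear_combination hr
  have hρ₁ : 0 ≤ rA * sin (σ - α) ^ 2 := by rw [hrA]; positivity
  have hρ₂ : 0 ≤ rB * sin (σ - β) ^ 2 := by rw [hrB]; positivity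
  have hρ₃ : 0 ≤ rC * sin (σ - γ) ^ 2 := by rw [hrC]; positivity
  obtain ⟨h₁AB, h₂AB, d₁₂⟩ := homothetic_incircles_tangent ha.symm hb.symm hc.symm
    (by linarith) (by linarith) hr hr0 hρ₁ hρ₂ (malfatti_radii_gap_sq hs0 hsa hsb hsc hr hr0
      hrA hrB (by rw [show σ - α + (σ - β) = γ by rw [hσ]; ring, hsinγ]))
  obtain ⟨h₂BC, h₃BC, d₂₃⟩ := homothetic_incircles_tangent hb.symm hc.symm ha.symm
    (by linarith) (by linarith) hr' hr0 hρ₂ hρ₃ (malfatti_radii_gap_sq hs0 hsb hsc hsa hr' hr0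
      hrB hrC (by rw [show σ - β + (σ - γ) = α by rw [hσ]; ring, hsinα]))
  obtain ⟨h₃CA, h₁CA, d₃₁⟩ := homothetic_incircles_tangent hc.symm ha.symm hb.symm
    (by linarith) (by linarith) hr'' hr0 hρ₃ hρ₁ (malfatti_radii_gap_sq hs0 hsc hsa hsb hr'' hr0
      hrC hrA (by rw [show σ - γ + (σ - α) = β by rw [hσ]; ring, hsinβ]))
  rw [triangleIncenter_rotate] at h₂BC h₃BC d₂₃
  rw [triangleIncenter_rotate B C A, triangleIncenter_rotate] at h₃CA h₁CA d₃₁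
  exact ⟨_, _, _, h₁AB, h₁CA, h₂AB, h₂BC, h₃BC, h₃CA, d₁₂, by rw [dist_comm, d₃₁, add_comm], d₂₃⟩

theorem malfatti_circles_exist
    (A B C : EuclideanSpace ℝ (Fin 2))
    (hABC : AffineIndependent ℝ ![A, B, C])
    (a b c : ℝ) (ha : a = dist B C) (hb : b = dist C A) (hc : c = dist A B)
    (s rA rB rC α β γ σ r₁ r₂ r₃ : ℝ)
    (hs : s = (a + b + c) / 2)
    (hrA : rA = Real.sqrt (s * (s - b) * (s - c) / (s - a)))
    (hrB : rB = Real.sqrt (s * (s - c) * (s - a) / (s - b)))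
    (hrC : rC = Real.sqrt (s * (s - a) * (s - b) / (s - c)))
    (hα : α ∈ Set.Ioo 0 (π / 2)) (hβ : β ∈ Set.Ioo 0 (π / 2)) (hγ : γ ∈ Set.Ioo 0 (π / 2))
    (hsinα : Real.sin α ^ 2 = a / s)
    (hsinβ : Real.sin β ^ 2 = b / s)
    (hsinγ : Real.sin γ ^ 2 = c / s)
    (hσ : σ = (α + β + γ) / 2)
    (hr₁ : r₁ = rA * Real.sin (σ - α) ^ 2)
    (hr₂ : r₂ = rB * Real.sin (σ - β) ^ 2)
    (hr₃ : r₃ = rC * Real.sin (σ - γ) ^ 2) :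
    ∃ O₁ O₂ O₃ : EuclideanSpace ℝ (Fin 2),
      Metric.infDist O₁ (affineSpan ℝ {A, B} : Set (EuclideanSpace ℝ (Fin 2))) = r₁ ∧
      Metric.infDist O₁ (affineSpan ℝ {C, A} : Set (EuclideanSpace ℝ (Fin 2))) = r₁ ∧
      Metric.infDist O₂ (affineSpan ℝ {A, B} : Set (EuclideanSpace ℝ (Fin 2))) = r₂ ∧
      Metric.infDist O₂ (affineSpan ℝ {B, C} : Set (EuclideanSpace ℝ (Fin 2))) = r₂ ∧
      Metric.infDist O₃ (affineSpan ℝ {B, C} : Set (EuclideanSpace ℝ (Fin 2))) = r₃ ∧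
      Metric.infDist O₃ (affineSpan ℝ {C, A} : Set (EuclideanSpace ℝ (Fin 2))) = r₃ ∧
      dist O₁ O₂ = r₁ + r₂ ∧ dist O₁ O₃ = r₁ + r₃ ∧ dist O₂ O₃ = r₂ + r₃ :=
  malfatti_circles_exist_general A B C hABC a b c ha hb hc s rA rB rC α β γ σ r₁ r₂ r₃ hs hrA hrB
    hrC hsinα hsinβ hsinγ hσ hr₁ hr₂ hr₃
end
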